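/- arXiv:2208.06248 — 7 statements merged into one kernel-verified Lean document; each statement's English description precedes it below -/
import Mathlib

section
/- Let A be a 2×2 complex matrix and let B = A − (tr A / 2)·I. Then the numerical range W(A) is exactly the (possibly degenerate) closed elliptical disk whose foci are the two eigenvalues λ₁, λ₂ of A and whose major semi-axis is s⁺(A); concretely, W(A) = { z ∈ ℂ : |z − λ₁| + |z − λ₂| ≤ 2·s⁺(A) }, where s⁺(A) = (1/2)·√( tr(B*B) + |tr(B²)| ). -/
open Matrix Polynomial

/-- The numerical range of a 2×2 complex matrix. -/
def numRange (A : Matrix (Fin 2) (Fin 2) ℂ) : Set ℂ :=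
  { z | ∃ x : Fin 2 → ℂ, (∑ i, ‖x i‖ ^ 2) = 1 ∧ star x ⬝ᵥ A.mulVec x = z }

/-- s⁺(A) = (1/2)·√( tr(B*B) + |tr(B²)| ) for B = A − (tr A / 2)·I. -/
noncomputable def sPlus (A : Matrix (Fin 2) (Fin 2) ℂ) : ℝ :=
  let B := A - (Matrix.trace A / 2) • (1 : Matrix (Fin 2) (Fin 2) ℂ)
  (1 / 2) * Real.sqrt ((Matrix.trace (Bᴴ * B)).re + ‖Matrix.trace (B ^ 2)‖)

lemma ell_forward (m b p q r : ℝ) (hm : 0 ≤ m) (hb : 0 ≤ b)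
    (h : p^2 + q^2 + r^2 = 1) :
    Real.sqrt ((m*p+b*q - m)^2 + (b*r)^2) + Real.sqrt ((m*p+b*q + m)^2 + (b*r)^2)
      ≤ 2 * Real.sqrt (m^2 + b^2) := by
  rcases eq_or_lt_of_le (by positivity : (0:ℝ) ≤ m^2+b^2) with h0 | h0
  · have hm0 : m = 0 := by nlinarith
    have hb0 : b = 0 := by nlinarith
    simp [hm0, hb0]
  have ha : (0:ℝ) < Real.sqrt (m^2+b^2) := Real.sqrt_pos.mpr h0
  have ha2 : (Real.sqrt (m^2+b^2))^2 = m^2 + b^2 := Real.sq_sqrt (le_of_lt h0)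
  set a := Real.sqrt (m^2+b^2) with haa
  have hpq : p^2 + q^2 ≤ 1 := by nlinarith [sq_nonneg r]
  have hcs : (m*p+b*q)^2 ≤ m^2+b^2 := by nlinarith [sq_nonneg (m*q - b*p)]
  have hXa : m * (m*p+b*q) ≤ a^2 := by nlinarith [sq_nonneg (m*p+b*q-a), sq_nonneg (m-a)]
  have hXa' : -(m*(m*p+b*q)) ≤ a^2 := by nlinarith [sq_nonneg (m*p+b*q+a), sq_nonneg (m-a)]
  have key : b^2*(m*p+b*q)^2 + (m^2+b^2)*(b*r)^2 ≤ (m^2+b^2)*b^2 := by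
    have e : b^2*(m^2+b^2)*(p^2+q^2+r^2) = b^2*(m^2+b^2) := by rw [h]; ring
    nlinarith [mul_nonneg (sq_nonneg b) (sq_nonneg (m*q-b*p)), e]
  have h1 : Real.sqrt ((m*p+b*q - m)^2 + (b*r)^2) ≤ (a^2 - m*(m*p+b*q))/a := by
    rw [Real.sqrt_le_left (div_nonneg (by linarith) ha.le)]
    rw [div_pow, le_div_iff₀ (by positivity)]
    rw [ha2]
    nlinarith [key]
  have h2 : Real.sqrt ((m*p+b*q + m)^2 + (b*r)^2) ≤ (a^2 + m*(m*p+b*q))/a := by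
    rw [Real.sqrt_le_left (div_nonneg (by linarith) ha.le)]
    rw [div_pow, le_div_iff₀ (by positivity)]
    rw [ha2]
    nlinarith [key]
  have hs : (a^2 - m*(m*p+b*q))/a + (a^2 + m*(m*p+b*q))/a = 2*a := by field_simp; ring
  linarith

lemma ell_construct (m b X Y : ℝ) (hm : 0 ≤ m) (hb : 0 ≤ b)
    (hX2 : X^2 ≤ m^2+b^2) (key : (m^2+b^2)*Y^2 ≤ b^2*((m^2+b^2) - X^2))
    (hz : m = 0 → b = 0 → (X = 0 ∧ Y = 0)) :
    ∃ p q r : ℝ, p^2 + q^2 + r^2 = 1 ∧ m*p + b*q = X ∧ b*r = Y := by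
  rcases eq_or_lt_of_le hb with hb0 | hb0
  · subst hb0
    rcases eq_or_lt_of_le hm with hm0 | hm0
    · subst hm0
      obtain ⟨hX0, hY0⟩ := hz rfl rfl
      exact ⟨1, 0, 0, by ring, by rw [hX0]; ring, by rw [hY0]; ring⟩
    · have hY2 : Y^2 ≤ 0 := by nlinarith [key, mul_pos hm0 hm0]
      have hY0 : Y = 0 := pow_eq_zero_iff two_ne_zero |>.mp (le_antisymm hY2 (sq_nonneg Y))
      refine ⟨X/m, Real.sqrt (1 - (X/m)^2), 0, ?_,
        by rw [mul_comm, div_mul_cancel₀ _ (ne_of_gt hm0), zero_mul, add_zero],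
        by rw [hY0]; ring⟩
      rw [Real.sq_sqrt]
      · ring
      · rw [div_pow, sub_nonneg, div_le_one (by positivity)]
        nlinarith
  · have hab : (0:ℝ) < m^2+b^2 := by positivity
    set r := Y / b with hr
    have hrY : b * r = Y := by rw [hr]; field_simp
    have hr2 : (m^2+b^2) * r^2 ≤ (m^2+b^2) - X^2 := by
      rw [hr, div_pow, ← sub_nonneg]
      have e : (m^2+b^2) - X^2 - (m^2+b^2)*(Y^2/b^2)
          = (b^2*((m^2+b^2)-X^2) - (m^2+b^2)*Y^2)/b^2 := by field_simp
      rw [e]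
      exact div_nonneg (by linarith) (by positivity)
    have hs2 : 0 ≤ (m^2+b^2)*(1-r^2) - X^2 := by nlinarith
    set s := Real.sqrt ((m^2+b^2)*(1-r^2) - X^2) with hss
    have hs2' : s^2 = (m^2+b^2)*(1-r^2) - X^2 := Real.sq_sqrt hs2
    refine ⟨(X*m - s*b)/(m^2+b^2), (X*b + s*m)/(m^2+b^2), r, ?_, ?_, hrY⟩
    · field_simp
      nlinarith [hs2']
    · field_simp
      ring

lemma ell_reverse (m b X Y : ℝ) (hm : 0 ≤ m) (hb : 0 ≤ b)
    (h : Real.sqrt ((X - m)^2 + Y^2) + Real.sqrt ((X + m)^2 + Y^2)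
          ≤ 2 * Real.sqrt (m^2 + b^2)) :
    ∃ p q r : ℝ, p^2 + q^2 + r^2 = 1 ∧ m*p + b*q = X ∧ b*r = Y := by
  have ha2 : (Real.sqrt (m^2+b^2))^2 = m^2 + b^2 := Real.sq_sqrt (by positivity)
  set a := Real.sqrt (m^2+b^2) with haa
  have ha0 : 0 ≤ a := Real.sqrt_nonneg _
  have hd1 : |X - m| ≤ Real.sqrt ((X - m)^2 + Y^2) := by
    rw [← Real.sqrt_sq_eq_abs]; exact Real.sqrt_le_sqrt (by nlinarith [sq_nonneg Y])
  have hd2 : |X + m| ≤ Real.sqrt ((X + m)^2 + Y^2) := by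
    rw [← Real.sqrt_sq_eq_abs]; exact Real.sqrt_le_sqrt (by nlinarith [sq_nonneg Y])
  have hXa : |X| ≤ a := by
    have h2 : |2*X| ≤ |X - m| + |X + m| := by
      have h3 := abs_add_le (X - m) (X + m); rw [show X - m + (X + m) = 2*X by ring] at h3; exact h3
    rw [abs_mul] at h2; simp only [abs_two] at h2; linarith
  have hd1n : 0 ≤ Real.sqrt ((X - m)^2 + Y^2) := Real.sqrt_nonneg _
  have hd2n : 0 ≤ Real.sqrt ((X + m)^2 + Y^2) := Real.sqrt_nonneg _
  have hsq1 : (Real.sqrt ((X - m)^2 + Y^2))^2 = (X - m)^2 + Y^2 := Real.sq_sqrt (by positivity)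
  have hsq2 : (Real.sqrt ((X + m)^2 + Y^2))^2 = (X + m)^2 + Y^2 := Real.sq_sqrt (by positivity)
  have step1 : a * Real.sqrt ((X + m)^2 + Y^2) ≤ a^2 + m*X := by
    have h' : Real.sqrt ((X - m)^2 + Y^2) ≤ 2*a - Real.sqrt ((X + m)^2 + Y^2) := by linarith
    have h'' : (X - m)^2 + Y^2 ≤ (2*a - Real.sqrt ((X + m)^2 + Y^2))^2 := by
      rw [← hsq1]; exact pow_le_pow_left₀ hd1n h' 2
    nlinarith [hsq2]
  have key : (m^2+b^2)*Y^2 ≤ b^2*((m^2+b^2) - X^2) := by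
    have e : (m^2+b^2)*((X+m)^2+Y^2) ≤ ((m^2+b^2) + m*X)^2 := by
      have h2 := pow_le_pow_left₀ (mul_nonneg ha0 hd2n) step1 2
      rw [mul_pow, hsq2, ha2] at h2
      exact h2
    nlinarith [e]
  have hX2 : X^2 ≤ m^2+b^2 := by
    have h2 := pow_le_pow_left₀ (abs_nonneg X) hXa 2
    rw [sq_abs, ha2] at h2; exact h2
  refine ell_construct m b X Y hm hb hX2 key ?_
  intro hm0 hb0
  have ha0' : a = 0 := by rw [haa, hm0, hb0]; simp
  have hz1 : Real.sqrt ((X - m)^2 + Y^2) = 0 := by nlinarith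
  have hXY : (X - m)^2 + Y^2 = 0 := by rw [← hsq1, hz1]; ring
  have e1 : (X - m)^2 = 0 := by linarith [sq_nonneg Y, sq_nonneg (X-m)]
  have e2 : Y^2 = 0 := by linarith [sq_nonneg Y, sq_nonneg (X-m)]
  have e1' : X - m = 0 := pow_eq_zero_iff two_ne_zero |>.mp e1
  exact ⟨by rw [hm0] at e1'; linarith, pow_eq_zero_iff two_ne_zero |>.mp e2⟩

lemma abs_sqrt (u : ℂ) : ‖u‖ = Real.sqrt (u.re^2 + u.im^2) := by
  rw [Complex.norm_def, Complex.normSq_apply]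
  congr 1
  ring

lemma ell_c (mu c z : ℂ) :
    (∃ (p : ℝ) (w : ℂ), p^2 + (‖w‖)^2 = 1 ∧ z = mu*p + (c/2)*w)
    ↔ ‖z - mu‖ + ‖z + mu‖
        ≤ 2 * Real.sqrt ((‖mu‖)^2 + (‖c‖ / 2)^2) := by
  set M : ℝ := ‖mu‖ with hM
  set b : ℝ := ‖c‖ / 2 with hb
  set e : ℂ := if mu = 0 then 1 else mu / (M:ℂ) with he
  set f : ℂ := if c = 0 then 1 else c / (‖c‖ : ℂ) with hf
  have hM0 : 0 ≤ M := norm_nonneg mu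
  have hb0 : 0 ≤ b := by rw [hb]; positivity
  have hea : ‖e‖ = 1 := by
    rw [he]; split_ifs with h
    · simp
    · rw [norm_div, Complex.norm_real, Real.norm_eq_abs, abs_of_nonneg hM0, ← hM, div_self]
      simpa [hM] using h
  have hfa : ‖f‖ = 1 := by
    rw [hf]; split_ifs with h
    · simp
    · rw [norm_div, Complex.norm_real, Real.norm_eq_abs, abs_of_nonneg (norm_nonneg c), div_self]
      simpa using h
  have he0 : e ≠ 0 := by intro h; rw [h] at hea; simp at hea
  have hf0 : f ≠ 0 := by intro h; rw [h] at hfa; simp at hfa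
  have hmu : mu = (M:ℂ) * e := by
    rw [he]; split_ifs with h
    · simp [h, hM]
    · have hMne : (M:ℂ) ≠ 0 := by simpa [hM] using h
      field_simp
  have hc : c = (2*b:ℝ) * f := by
    rw [hf]; split_ifs with h
    · simp [h, hb]
    · have hcne : ((‖c‖ : ℝ):ℂ) ≠ 0 := by simpa using h
      rw [hb]; push_cast; field_simp; try ring
  constructor
  · rintro ⟨p, w, hpw, rfl⟩
    set w' : ℂ := f * w / e with hw'
    have hw'a : ‖w'‖ = ‖w‖ := by
      rw [hw', norm_div, norm_mul, hfa, hea, one_mul, div_one]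
    set q : ℝ := w'.re with hq
    set r : ℝ := w'.im with hr
    have hqr : q^2 + r^2 = (‖w‖)^2 := by
      rw [← hw'a, abs_sqrt, Real.sq_sqrt (by positivity)]
    have hsum : p^2 + q^2 + r^2 = 1 := by rw [add_assoc, hqr]; exact hpw
    have hz : mu*(p:ℂ) + (c/2)*w = e * ((M:ℂ)*(p:ℂ) + (b:ℂ)*w') := by
      rw [hmu, hc, hw']; push_cast; field_simp
    have hre : ((M:ℂ)*(p:ℂ) + (b:ℂ)*w').re = M*p + b*q := by
      simp [Complex.mul_re, hq]
    have him : ((M:ℂ)*(p:ℂ) + (b:ℂ)*w').im = b*r := by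
      simp [Complex.mul_im, hr]
    have h1 : ‖mu*(p:ℂ) + (c/2)*w - mu‖
        = Real.sqrt ((M*p + b*q - M)^2 + (b*r)^2) := by
      rw [hz, show e * ((M:ℂ)*(p:ℂ) + (b:ℂ)*w') - mu = e * (((M:ℂ)*(p:ℂ) + (b:ℂ)*w') - (M:ℂ)) by rw [hmu]; ring,
        norm_mul, hea, one_mul, abs_sqrt]
      simp [hre, him]
    have h2 : ‖mu*(p:ℂ) + (c/2)*w + mu‖
        = Real.sqrt ((M*p + b*q + M)^2 + (b*r)^2) := by
      rw [hz, show e * ((M:ℂ)*(p:ℂ) + (b:ℂ)*w') + mu = e * (((M:ℂ)*(p:ℂ) + (b:ℂ)*w') + (M:ℂ)) by rw [hmu]; ring,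
        norm_mul, hea, one_mul, abs_sqrt]
      simp [hre, him]
    rw [h1, h2]
    exact ell_forward M b p q r hM0 hb0 hsum
  · intro h
    set X : ℝ := (z/e).re with hX
    set Y : ℝ := (z/e).im with hY
    have hze : z = e * (z/e) := by field_simp
    have hd1 : ‖z - mu‖ = Real.sqrt ((X - M)^2 + Y^2) := by
      rw [show z - mu = e * (z/e - (M:ℂ)) by rw [hmu]; field_simp; try ring, norm_mul, hea, one_mul, abs_sqrt]
      simp [hX, hY]
    have hd2 : ‖z + mu‖ = Real.sqrt ((X + M)^2 + Y^2) := by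
      rw [show z + mu = e * (z/e + (M:ℂ)) by rw [hmu]; field_simp; try ring, norm_mul, hea, one_mul, abs_sqrt]
      simp [hX, hY]
    rw [hd1, hd2] at h
    obtain ⟨p, q, r, hpqr, hXe, hYe⟩ := ell_reverse M b X Y hM0 hb0 h
    refine ⟨p, e * ((q:ℂ) + (r:ℂ)*Complex.I) / f, ?_, ?_⟩
    · rw [norm_div, norm_mul, hea, hfa, one_mul, div_one, abs_sqrt]
      simp only [Complex.add_re, Complex.add_im, Complex.ofReal_re, Complex.ofReal_im,
        Complex.mul_re, Complex.mul_im, Complex.I_re, Complex.I_im]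
      ring_nf
      rw [Real.sq_sqrt (by positivity)]
      linarith [hpqr]
    · have hzeta : (M:ℂ)*(p:ℂ) + (b:ℂ)*((q:ℂ) + (r:ℂ)*Complex.I) = z/e := by
        apply Complex.ext
        · have e1 : ((M:ℂ)*(p:ℂ) + (b:ℂ)*((q:ℂ) + (r:ℂ)*Complex.I)).re = M*p + b*q := by
            simp [Complex.mul_re]
          rw [e1, hXe]
        · have e2 : ((M:ℂ)*(p:ℂ) + (b:ℂ)*((q:ℂ) + (r:ℂ)*Complex.I)).im = b*r := by
            simp [Complex.mul_im]
          rw [e2, hYe]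
      calc z = e * (z/e) := hze
        _ = mu*(p:ℂ) + (c/2)*(e*((q:ℂ)+(r:ℂ)*Complex.I)/f) := by
            rw [← hzeta, hmu, hc]; push_cast; field_simp

lemma conj_mul_self (u : ℂ) : ((‖u‖ : ℝ) : ℂ)^2 = (starRingEnd ℂ) u * u := by
  rw [← Complex.ofReal_pow, Complex.sq_norm, Complex.normSq_eq_conj_mul_self]

lemma tri_val (l1 l2 c : ℂ) (x : Fin 2 → ℂ) :
    star x ⬝ᵥ (!![l1, c; 0, l2]).mulVec x
      = (starRingEnd ℂ) (x 0) * x 0 * l1 + (starRingEnd ℂ) (x 1) * x 1 * l2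
        + (starRingEnd ℂ) (x 0) * x 1 * c := by
  simp [Matrix.mulVec, dotProduct, Fin.sum_univ_two]
  ring

lemma numRange_tri (l1 l2 c : ℂ) :
    numRange !![l1, c; 0, l2] =
      {z | ∃ (p : ℝ) (w : ℂ), p^2 + (‖w‖)^2 = 1 ∧
        z = (l1+l2)/2 + ((l1-l2)/2)*p + (c/2)*w} := by
  ext z
  simp only [numRange, Set.mem_setOf_eq]
  constructor
  · rintro ⟨x, hn, rfl⟩
    rw [Fin.sum_univ_two] at hn
    refine ⟨‖x 0‖^2 - ‖x 1‖^2, 2 * (starRingEnd ℂ) (x 0) * x 1, ?_, ?_⟩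
    · have habs : ‖2 * (starRingEnd ℂ) (x 0) * x 1‖^2
          = 4 * (‖x 0‖)^2 * (‖x 1‖)^2 := by
        simp only [norm_mul, Complex.norm_conj, Complex.norm_two]
        ring
      rw [habs]
      nlinarith [hn]
    · rw [tri_val]
      have hnC : (starRingEnd ℂ) (x 0) * x 0 + (starRingEnd ℂ) (x 1) * x 1 = 1 := by
        have := congrArg (fun t : ℝ => (t : ℂ)) hn
        push_cast at this
        rw [conj_mul_self, conj_mul_self] at this
        exact this
      push_cast
      rw [conj_mul_self, conj_mul_self]
      linear_combination ((l1+l2)/2) * hnC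
  · rintro ⟨p, w, hpw, rfl⟩
    by_cases hp : p = -1
    · subst hp
      have hw : w = 0 := by
        have : ‖w‖ ^ 2 = 0 := by nlinarith
        simpa using pow_eq_zero_iff two_ne_zero |>.mp this
      refine ⟨![0, 1], by simp [Fin.sum_univ_two], ?_⟩
      rw [tri_val]
      simp [hw]
      ring
    · have hp2 : p^2 ≤ 1 := by nlinarith [sq_nonneg (‖w‖)]
      have hp1 : -1 ≤ p := by nlinarith
      have hplt : -1 < p := lt_of_le_of_ne hp1 (fun h => hp h.symm)
      set t : ℝ := (1+p)/2 with ht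
      have ht0 : 0 < t := by rw [ht]; linarith
      have hst : Real.sqrt t > 0 := Real.sqrt_pos.mpr ht0
      have hst2 : (Real.sqrt t)^2 = t := Real.sq_sqrt ht0.le
      set x : Fin 2 → ℂ := ![(Real.sqrt t : ℂ), w / (2 * (Real.sqrt t : ℂ))] with hx
      have hx0 : x 0 = (Real.sqrt t : ℂ) := rfl
      have hx1 : x 1 = w / (2 * (Real.sqrt t : ℂ)) := rfl
      have habs1 : ‖x 1‖^2 = (1-p)/2 := by
        rw [hx1, norm_div, norm_mul, Complex.norm_two, Complex.norm_real, Real.norm_eq_abs,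
          abs_of_nonneg hst.le, div_pow, mul_pow, hst2]
        rw [show ‖w‖ ^ 2 = 1 - p^2 by linarith, ht]
        have h1p : (0:ℝ) < 1 + p := by linarith
        field_simp
        ring
      have habs0 : ‖x 0‖^2 = t := by
        rw [hx0, Complex.norm_real, Real.norm_eq_abs, abs_of_nonneg hst.le, hst2]
      refine ⟨x, ?_, ?_⟩
      · rw [Fin.sum_univ_two, habs0, habs1, ht]; ring
      · rw [tri_val]
        have e0 : (starRingEnd ℂ) (x 0) * x 0 = (t:ℂ) := by
          rw [← conj_mul_self]; exact_mod_cast congrArg (fun u : ℝ => (u:ℂ)) habs0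
        have e1 : (starRingEnd ℂ) (x 1) * x 1 = (((1-p)/2 : ℝ):ℂ) := by
          rw [← conj_mul_self]; exact_mod_cast congrArg (fun u : ℝ => (u:ℂ)) habs1
        have e01 : (starRingEnd ℂ) (x 0) * x 1 = w / 2 := by
          rw [hx0, hx1, Complex.conj_ofReal]
          have : ((Real.sqrt t : ℝ):ℂ) ≠ 0 := by
            simpa using ne_of_gt hst
          field_simp
        rw [e0, e1, e01, ht]
        push_cast
        field_simp
        ring

lemma quad_conj (N U : Matrix (Fin 2) (Fin 2) ℂ) (x : Fin 2 → ℂ) :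
    star (U *ᵥ x) ⬝ᵥ (N *ᵥ (U *ᵥ x)) = star x ⬝ᵥ ((Uᴴ * N * U) *ᵥ x) := by
  rw [Matrix.star_mulVec, Matrix.mulVec_mulVec, dotProduct_mulVec,
    Matrix.vecMul_vecMul, ← dotProduct_mulVec, Matrix.mul_assoc]

lemma norm_sum_eq (y : Fin 2 → ℂ) :
    ((∑ i, ‖y i‖ ^ 2 : ℝ) : ℂ) = star y ⬝ᵥ y := by
  simp only [Fin.sum_univ_two, dotProduct, Pi.star_apply, RCLike.star_def]
  push_cast
  rw [show ((‖y 0‖ : ℂ))^2 = (starRingEnd ℂ) (y 0) * (y 0) by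
    rw [← Complex.ofReal_pow, Complex.sq_norm, Complex.normSq_eq_conj_mul_self]]
  rw [show ((‖y 1‖ : ℂ))^2 = (starRingEnd ℂ) (y 1) * (y 1) by
    rw [← Complex.ofReal_pow, Complex.sq_norm, Complex.normSq_eq_conj_mul_self]]


lemma norm_mulVec_one (U : Matrix (Fin 2) (Fin 2) ℂ) (hU : Uᴴ * U = 1) (x : Fin 2 → ℂ)
    (hx : (∑ i, ‖x i‖ ^ 2) = 1) :
    (∑ i, ‖(U *ᵥ x) i‖ ^ 2) = 1 := by
  have h := quad_conj 1 U x
  rw [Matrix.mul_one, hU, Matrix.one_mulVec, Matrix.one_mulVec] at h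
  have h2 : ((∑ i, ‖(U *ᵥ x) i‖ ^ 2 : ℝ) : ℂ)
      = ((∑ i, ‖x i‖ ^ 2 : ℝ) : ℂ) := by
    rw [norm_sum_eq, norm_sum_eq, h]
  have := Complex.ofReal_inj.mp h2
  rw [this, hx]

lemma numRange_unitary (U M : Matrix (Fin 2) (Fin 2) ℂ) (h1 : Uᴴ * U = 1) (h2 : U * Uᴴ = 1) :
    numRange (U * M * Uᴴ) = numRange M := by
  ext z
  simp only [numRange, Set.mem_setOf_eq]
  constructor
  · rintro ⟨x, hx, rfl⟩
    refine ⟨Uᴴ *ᵥ x, ?_, ?_⟩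
    · exact norm_mulVec_one Uᴴ (by rw [Matrix.conjTranspose_conjTranspose]; exact h2) x hx
    · rw [quad_conj, Matrix.conjTranspose_conjTranspose]
  · rintro ⟨x, hx, rfl⟩
    refine ⟨U *ᵥ x, ?_, ?_⟩
    · exact norm_mulVec_one U h1 x hx
    · rw [quad_conj]
      congr 1
      rw [show Uᴴ * (U * M * Uᴴ) * U = (Uᴴ * U) * M * (Uᴴ * U) by
        simp only [Matrix.mul_assoc], h1, Matrix.one_mul, Matrix.mul_one]

lemma charpoly_data (A : Matrix (Fin 2) (Fin 2) ℂ) (l1 l2 : ℂ)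
    (heig : A.charpoly = (X - C l1) * (X - C l2)) :
    Matrix.trace A = l1 + l2 ∧ Matrix.det A = l1 * l2 := by
  have hexp : (X - C l1) * (X - C l2) = X^2 - (C l1 + C l2) * X + C l1 * C l2 := by ring
  constructor
  · rw [Matrix.trace_eq_neg_charpoly_coeff, heig, hexp]
    simp [Polynomial.coeff_X_pow, Polynomial.coeff_C]
  · rw [Matrix.det_eq_sign_charpoly_coeff, heig, hexp]
    simp [Polynomial.coeff_X_pow, Polynomial.coeff_C]

lemma schur (A : Matrix (Fin 2) (Fin 2) ℂ) (l1 l2 : ℂ)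
    (heig : A.charpoly = (X - C l1) * (X - C l2)) :
    ∃ (U : Matrix (Fin 2) (Fin 2) ℂ) (c : ℂ),
      Uᴴ * U = 1 ∧ U * Uᴴ = 1 ∧ Uᴴ * A * U = !![l1, c; 0, l2] := by
  obtain ⟨htr, hdet⟩ := charpoly_data A l1 l2 heig
  rw [Matrix.trace_fin_two] at htr
  rw [Matrix.det_fin_two] at hdet
  have hdet0 : Matrix.det (A - l1 • 1) = 0 := by
    rw [Matrix.det_fin_two]
    simp only [Matrix.sub_apply, Matrix.smul_apply, Matrix.one_apply, smul_eq_mul]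
    norm_num
    linear_combination hdet - l1 * htr
  obtain ⟨v, hv0, hv⟩ := Matrix.exists_mulVec_eq_zero_iff.mpr hdet0
  have hAv : A *ᵥ v = l1 • v := by
    have h1 : (A - l1 • 1) *ᵥ v = A *ᵥ v - (l1 • 1) *ᵥ v := Matrix.sub_mulVec _ _ _
    rw [hv] at h1
    have h2 : (l1 • (1 : Matrix (Fin 2) (Fin 2) ℂ)) *ᵥ v = l1 • v := by
      rw [Matrix.smul_mulVec, Matrix.one_mulVec]
    rw [h2] at h1
    exact (sub_eq_zero.mp h1.symm)
  -- normalize v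
  have hvcase : v 0 ≠ 0 ∨ v 1 ≠ 0 := by
    by_contra hcon
    push_neg at hcon
    exact hv0 (funext fun i => by fin_cases i <;> simp [hcon.1, hcon.2])
  have hvpos : 0 < ‖v 0‖^2 + ‖v 1‖^2 := by
    rcases hvcase with h | h
    · nlinarith [sq_nonneg (‖v 1‖), pow_pos (norm_pos_iff.mpr h) 2]
    · nlinarith [sq_nonneg (‖v 0‖), pow_pos (norm_pos_iff.mpr h) 2]
  set n : ℝ := Real.sqrt (‖v 0‖^2 + ‖v 1‖^2) with hn
  have hnpos : 0 < n := Real.sqrt_pos.mpr hvpos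
  have hn2 : n^2 = ‖v 0‖^2 + ‖v 1‖^2 := Real.sq_sqrt hvpos.le
  obtain ⟨u, hu⟩ : ∃ u : Fin 2 → ℂ, u = fun i => v i / (n : ℂ) := ⟨_, rfl⟩
  have hnC : ((n:ℝ):ℂ) ≠ 0 := by
    simp only [ne_eq, Complex.ofReal_eq_zero]
    exact ne_of_gt hnpos
  have huabs : ‖u 0‖^2 + ‖u 1‖^2 = 1 := by
    simp only [hu, norm_div, Complex.norm_real, Real.norm_eq_abs, abs_of_nonneg hnpos.le, div_pow]
    rw [← add_div, ← hn2]
    exact div_self (ne_of_gt (by positivity))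
  have hC : (starRingEnd ℂ) (u 0) * u 0 + (starRingEnd ℂ) (u 1) * u 1 = 1 := by
    have := congrArg (fun t : ℝ => (t : ℂ)) huabs
    push_cast at this
    rw [show ((‖u 0‖ : ℂ))^2 = (starRingEnd ℂ) (u 0) * (u 0) by
      rw [← Complex.ofReal_pow, Complex.sq_norm, Complex.normSq_eq_conj_mul_self],
      show ((‖u 1‖ : ℂ))^2 = (starRingEnd ℂ) (u 1) * (u 1) by
      rw [← Complex.ofReal_pow, Complex.sq_norm, Complex.normSq_eq_conj_mul_self]] at this
    exact this
  have hAu : A *ᵥ u = l1 • u := by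
    have h3 : u = ((n:ℂ))⁻¹ • v := by
      funext i; simp [hu, div_eq_inv_mul]
    rw [h3, Matrix.mulVec_smul, hAv, smul_comm]
  have hA0 : A 0 0 * u 0 + A 0 1 * u 1 = l1 * u 0 := by
    have := congrFun hAu 0
    simpa [Matrix.mulVec, dotProduct, Fin.sum_univ_two] using this
  have hA1 : A 1 0 * u 0 + A 1 1 * u 1 = l1 * u 1 := by
    have := congrFun hAu 1
    simpa [Matrix.mulVec, dotProduct, Fin.sum_univ_two] using this
  set U : Matrix (Fin 2) (Fin 2) ℂ :=
    !![u 0, -((starRingEnd ℂ) (u 1)); u 1, (starRingEnd ℂ) (u 0)] with hUdef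
  have hU1 : Uᴴ * U = 1 := by
    ext i j
    fin_cases i <;> fin_cases j <;>
      simp [hUdef, Matrix.mul_apply, Fin.sum_univ_two, Matrix.conjTranspose_apply,
        Matrix.one_apply] <;>
      (try first | linear_combination hC | ring)
  have hU2 : U * Uᴴ = 1 := by
    ext i j
    fin_cases i <;> fin_cases j <;>
      simp [hUdef, Matrix.mul_apply, Fin.sum_univ_two, Matrix.conjTranspose_apply,
        Matrix.one_apply] <;>
      (try first | linear_combination hC | ring)
  have htrT : (Uᴴ * A * U) 0 0 + (Uᴴ * A * U) 1 1 = l1 + l2 := by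
    have h1 : Matrix.trace (Uᴴ * A * U) = Matrix.trace (U * Uᴴ * A) := by
      rw [Matrix.trace_mul_cycle]
    rw [hU2, Matrix.one_mul] at h1
    rw [Matrix.trace_fin_two, Matrix.trace_fin_two] at h1
    rw [h1]
    linear_combination htr
  have hT00 : (Uᴴ * A * U) 0 0 = l1 := by
    simp [hUdef, Matrix.mul_apply, Fin.sum_univ_two, Matrix.conjTranspose_apply]
    linear_combination (starRingEnd ℂ) (u 0) * hA0 + (starRingEnd ℂ) (u 1) * hA1 + l1 * hC
  have hT10 : (Uᴴ * A * U) 1 0 = 0 := by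
    simp [hUdef, Matrix.mul_apply, Fin.sum_univ_two, Matrix.conjTranspose_apply]
    linear_combination (-(u 1)) * hA0 + (u 0) * hA1
  have hT11 : (Uᴴ * A * U) 1 1 = l2 := by linear_combination htrT - hT00
  refine ⟨U, (Uᴴ * A * U) 0 1, hU1, hU2, ?_⟩
  conv_lhs => rw [Matrix.eta_fin_two (Uᴴ * A * U)]
  rw [hT00, hT10, hT11]

lemma sPlus_def (A : Matrix (Fin 2) (Fin 2) ℂ) :
    sPlus A = (1/2) * Real.sqrt
      ((Matrix.trace ((A - (Matrix.trace A / 2) • 1)ᴴ * (A - (Matrix.trace A / 2) • 1))).re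
        + ‖Matrix.trace ((A - (Matrix.trace A / 2) • 1) ^ 2)‖) := rfl

lemma sPlus_unitary (U T : Matrix (Fin 2) (Fin 2) ℂ) (h1 : Uᴴ * U = 1) (h2 : U * Uᴴ = 1) :
    sPlus (U * T * Uᴴ) = sPlus T := by
  have htr : Matrix.trace (U * T * Uᴴ) = Matrix.trace T := by
    rw [Matrix.trace_mul_cycle, h1, Matrix.one_mul]
  set s : ℂ := Matrix.trace T / 2 with hs
  have hB : U * T * Uᴴ - (Matrix.trace (U * T * Uᴴ) / 2) • 1
      = U * (T - s • 1) * Uᴴ := by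
    rw [htr, Matrix.mul_sub, Matrix.sub_mul]
    congr 1
    rw [Matrix.mul_smul, Matrix.mul_one, Matrix.smul_mul, h2]
  rw [sPlus_def, sPlus_def, hB]
  set B : Matrix (Fin 2) (Fin 2) ℂ := T - s • 1 with hBdef
  have hmulU : ∀ M N : Matrix (Fin 2) (Fin 2) ℂ,
      (U*M*Uᴴ)*(U*N*Uᴴ) = U*(M*N)*Uᴴ := fun M N => by
    rw [show U*M*Uᴴ*(U*N*Uᴴ) = U*M*(Uᴴ*U)*(N*Uᴴ) by simp only [Matrix.mul_assoc],
      h1, Matrix.mul_one]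
    simp only [Matrix.mul_assoc]
  have hconj : (U*B*Uᴴ)ᴴ = U*Bᴴ*Uᴴ := by
    simp only [Matrix.conjTranspose_mul, Matrix.conjTranspose_conjTranspose, Matrix.mul_assoc]
  have e1 : (U * B * Uᴴ)ᴴ * (U * B * Uᴴ) = U * (Bᴴ * B) * Uᴴ := by
    rw [hconj, hmulU]
  have e2 : (U * B * Uᴴ)^2 = U * B^2 * Uᴴ := by
    rw [pow_two, pow_two, hmulU]
  have t1 : Matrix.trace (U * (Bᴴ * B) * Uᴴ) = Matrix.trace (Bᴴ * B) := by
    rw [Matrix.trace_mul_cycle, h1, Matrix.one_mul]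
  have t2 : Matrix.trace (U * B^2 * Uᴴ) = Matrix.trace (B^2) := by
    rw [Matrix.trace_mul_cycle, h1, Matrix.one_mul]
  rw [e1, e2, t1, t2]

lemma sPlus_tri (l1 l2 c : ℂ) :
    sPlus !![l1, c; 0, l2]
      = Real.sqrt ((‖(l1-l2)/2‖)^2 + (‖c‖ / 2)^2) := by
  set mu : ℂ := (l1 - l2)/2 with hmu
  have hB : !![l1, c; 0, l2] - (Matrix.trace !![l1, c; 0, l2] / 2) • 1
      = !![mu, c; 0, -mu] := by
    ext i j
    fin_cases i <;> fin_cases j <;>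
      simp [Matrix.trace_fin_two, Matrix.sub_apply, Matrix.smul_apply, Matrix.one_apply, hmu] <;>
      ring
  rw [sPlus_def, hB]
  have h1 : Matrix.trace ((!![mu, c; 0, -mu])ᴴ * !![mu, c; 0, -mu])
      = ((‖mu‖)^2 + ((‖c‖)^2 + (‖mu‖)^2) : ℝ) := by
    have : ((‖mu‖)^2 + ((‖c‖)^2 + (‖mu‖)^2) : ℂ)
        = (starRingEnd ℂ) mu * mu + ((starRingEnd ℂ) c * c + (starRingEnd ℂ) mu * mu) := by
      rw [show ((‖mu‖ : ℂ))^2 = (starRingEnd ℂ) mu * mu by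
        rw [← Complex.ofReal_pow, Complex.sq_norm, Complex.normSq_eq_conj_mul_self],
        show ((‖c‖ : ℂ))^2 = (starRingEnd ℂ) c * c by
        rw [← Complex.ofReal_pow, Complex.sq_norm, Complex.normSq_eq_conj_mul_self]]
    have this2 : ((‖mu‖ ^ 2 + (‖c‖ ^ 2 + ‖mu‖ ^ 2) : ℝ) : ℂ)
        = (starRingEnd ℂ) mu * mu + ((starRingEnd ℂ) c * c + (starRingEnd ℂ) mu * mu) := by
      push_cast
      exact_mod_cast this
    rw [this2]
    simp [Matrix.trace_fin_two, Matrix.mul_apply, Fin.sum_univ_two, Matrix.conjTranspose_apply]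
    try ring
  have h2 : Matrix.trace ((!![mu, c; 0, -mu])^2) = 2 * mu^2 := by
    rw [pow_two]
    simp [Matrix.trace_fin_two, Matrix.mul_apply, Fin.sum_univ_two]
    try ring
  rw [h1, h2]
  rw [Complex.ofReal_re]
  have habs : ‖2 * mu^2‖ = 2 * (‖mu‖)^2 := by
    rw [norm_mul, norm_pow, Complex.norm_two]
  rw [habs]
  rw [show (‖mu‖)^2 + ((‖c‖)^2 + (‖mu‖)^2) + 2*(‖mu‖)^2
      = 2^2 * ((‖mu‖)^2 + (‖c‖ / 2)^2) by ring]
  rw [Real.sqrt_mul (by positivity), Real.sqrt_sq (by norm_num)]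
  ring

theorem stmt0 (A : Matrix (Fin 2) (Fin 2) ℂ) (lam1 lam2 : ℂ)
    (heig : A.charpoly = (X - C lam1) * (X - C lam2)) :
    numRange A =
      { z : ℂ | ‖z - lam1‖ + ‖z - lam2‖ ≤ 2 * sPlus A } := by
  obtain ⟨U, c, hU1, hU2, hT⟩ := schur A lam1 lam2 heig
  have hA : A = U * !![lam1, c; 0, lam2] * Uᴴ := by
    rw [← hT]
    rw [show U * (Uᴴ * A * U) * Uᴴ = (U * Uᴴ) * A * (U * Uᴴ) by simp only [Matrix.mul_assoc],
      hU2, Matrix.one_mul, Matrix.mul_one]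
  rw [hA, numRange_unitary U _ hU1 hU2, sPlus_unitary U _ hU1 hU2, sPlus_tri, numRange_tri]
  ext z
  simp only [Set.mem_setOf_eq]
  have hiff := ell_c ((lam1-lam2)/2) c (z - (lam1+lam2)/2)
  rw [show z - (lam1+lam2)/2 - (lam1-lam2)/2 = z - lam1 by ring,
    show z - (lam1+lam2)/2 + (lam1-lam2)/2 = z - lam2 by ring] at hiff
  constructor
  · rintro ⟨p, w, hpw, rfl⟩
    exact hiff.mp ⟨p, w, hpw, by ring⟩
  · intro h
    obtain ⟨p, w, hpw, hz⟩ := hiff.mpr h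
    exact ⟨p, w, hpw, by linear_combination hz⟩
end

section
/- Let b, c ≥ 0 be real numbers and A = [[c, 2b],[0, −c]]. Then the numerical range of A is the (possibly degenerate) closed elliptical disk in canonical position with major semi-axis √(b² + c²) along the real axis and minor semi-axis b along the imaginary axis: W(A) = { z ∈ ℂ : |z + c| + |z − c| ≤ 2√(b² + c²) } if b > 0 or c > 0, and W(A) = {0} if b = c = 0. -/
open Matrix

lemma myval_re (b c : ℝ) (x : Fin 2 → ℂ) :
    (star x ⬝ᵥ (!![(c:ℂ), 2*b; 0, -c]).mulVec x).re
    = c*((x 0).re^2+(x 0).im^2 - (x 1).re^2 - (x 1).im^2)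
      + 2*b*((x 0).re*(x 1).re + (x 0).im*(x 1).im) := by
  simp [Matrix.mulVec, dotProduct, Fin.sum_univ_two, Complex.mul_re, Complex.mul_im]
  ring

lemma myval_im (b c : ℝ) (x : Fin 2 → ℂ) :
    (star x ⬝ᵥ (!![(c:ℂ), 2*b; 0, -c]).mulVec x).im
    = 2*b*((x 0).re*(x 1).im - (x 0).im*(x 1).re) := by
  simp [Matrix.mulVec, dotProduct, Fin.sum_univ_two, Complex.mul_re, Complex.mul_im]
  ring

lemma mymem_iff (b c : ℝ) (z : ℂ) :
    z ∈ numRange !![(c:ℂ), 2*b; 0, -c] ↔ ∃ p q r t : ℝ,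
      p^2+q^2+r^2+t^2 = 1 ∧
      z.re = c*(p^2+q^2-r^2-t^2) + 2*b*(p*r+q*t) ∧
      z.im = 2*b*(p*t-q*r) := by
  constructor
  · rintro ⟨x, hx, rfl⟩
    refine ⟨(x 0).re, (x 0).im, (x 1).re, (x 1).im, ?_, myval_re b c x, myval_im b c x⟩
    simp only [Fin.sum_univ_two, Complex.sq_norm, Complex.normSq_apply] at hx
    nlinarith [hx]
  · rintro ⟨p, q, r, t, h1, h2, h3⟩
    refine ⟨![(↑p + ↑q*Complex.I), (↑r + ↑t*Complex.I)], ?_, ?_⟩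
    · simp only [Fin.sum_univ_two, Matrix.cons_val_zero, Matrix.cons_val_one, Matrix.head_cons,
        Complex.sq_norm, Complex.normSq_add_mul_I]
      linarith
    · apply Complex.ext
      · rw [myval_re]
        simp only [Matrix.cons_val_zero, Matrix.cons_val_one, Matrix.head_cons,
          Complex.add_re, Complex.ofReal_re, Complex.mul_re, Complex.I_re, Complex.I_im,
          Complex.ofReal_im, Complex.add_im, Complex.mul_im]
        rw [h2]; ring
      · rw [myval_im]
        simp only [Matrix.cons_val_zero, Matrix.cons_val_one, Matrix.head_cons,
          Complex.add_re, Complex.ofReal_re, Complex.mul_re, Complex.I_re, Complex.I_im,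
          Complex.ofReal_im, Complex.add_im, Complex.mul_im]
        rw [h3]; ring

lemma myabs_add (z : ℂ) (r : ℝ) :
    ‖z + r‖ = Real.sqrt ((z.re + r)^2 + z.im^2) := by
  rw [Complex.norm_def, Complex.normSq_apply]
  simp only [Complex.add_re, Complex.ofReal_re, Complex.add_im, Complex.ofReal_im, add_zero]
  ring_nf

lemma myabs_sub (z : ℂ) (r : ℝ) :
    ‖z - r‖ = Real.sqrt ((z.re - r)^2 + z.im^2) := by
  rw [Complex.norm_def, Complex.normSq_apply]
  simp only [Complex.sub_re, Complex.ofReal_re, Complex.sub_im, Complex.ofReal_im, sub_zero]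
  ring_nf

lemma myfwd (b c a X Y s u v : ℝ) (hb : 0 ≤ b) (hc : 0 ≤ c) (ha : 0 < a)
    (ha2 : a^2 = b^2 + c^2)
    (hsum : s^2 + 4*u^2 + 4*v^2 ≤ 1)
    (hX : X = c*s + 2*b*u) (hY : Y = 2*b*v) :
    Real.sqrt ((X+c)^2 + Y^2) + Real.sqrt ((X-c)^2 + Y^2) ≤ 2*a := by
  have hXa : X^2 ≤ a^2 := by
    rw [hX]
    nlinarith [sq_nonneg (b*s - 2*c*u), sq_nonneg (b*v), sq_nonneg (c*v),
      mul_nonneg (mul_nonneg hb hb) (sub_nonneg.2 hsum),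
      mul_nonneg (mul_nonneg hc hc) (sub_nonneg.2 hsum)]
  have hdisk : b^2*X^2 + a^2*Y^2 ≤ a^2*b^2 := by
    rw [hX, hY]
    have h1 : 0 ≤ b^2*(b*s-2*c*u)^2 := by positivity
    have h2 : 0 ≤ b^2*(c^2+b^2)*(1-s^2-4*u^2-4*v^2) := by
      apply mul_nonneg (by positivity); linarith
    nlinarith [h1, h2]
  have hca : c ≤ a := by nlinarith [sq_nonneg b]
  have hXge : -a ≤ X := by nlinarith
  have hXle : X ≤ a := by nlinarith
  have hnum1 : 0 ≤ a^2 + c*X := by nlinarith [mul_nonneg hc (by linarith : (0:ℝ) ≤ X + a)]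
  have hnum2 : 0 ≤ a^2 - c*X := by nlinarith [mul_nonneg hc (by linarith : (0:ℝ) ≤ a - X)]
  have hb1 : Real.sqrt ((X+c)^2 + Y^2) ≤ (a^2 + c*X)/a := by
    rw [show (a^2+c*X)/a = Real.sqrt (((a^2+c*X)/a)^2) from (Real.sqrt_sq (by positivity)).symm]
    apply Real.sqrt_le_sqrt
    rw [div_pow, le_div_iff₀ (by positivity)]
    nlinarith [hdisk]
  have hb2 : Real.sqrt ((X-c)^2 + Y^2) ≤ (a^2 - c*X)/a := by
    rw [show (a^2-c*X)/a = Real.sqrt (((a^2-c*X)/a)^2) from (Real.sqrt_sq (by positivity)).symm]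
    apply Real.sqrt_le_sqrt
    rw [div_pow, le_div_iff₀ (by positivity)]
    nlinarith [hdisk]
  have : (a^2 + c*X)/a + (a^2 - c*X)/a = 2*a := by field_simp; ring
  linarith

lemma mydisk (a c X Y : ℝ)
    (h : Real.sqrt ((X+c)^2+Y^2) + Real.sqrt ((X-c)^2+Y^2) ≤ 2*a) :
    (a^2-c^2)*X^2 + a^2*Y^2 ≤ a^2*(a^2-c^2) := by
  set d1 := Real.sqrt ((X+c)^2+Y^2) with hd1def
  set d2 := Real.sqrt ((X-c)^2+Y^2) with hd2def
  have hd1 : d1^2 = (X+c)^2+Y^2 := Real.sq_sqrt (by positivity)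
  have hd2 : d2^2 = (X-c)^2+Y^2 := Real.sq_sqrt (by positivity)
  have hd1n : 0 ≤ d1 := Real.sqrt_nonneg _
  have hd2n : 0 ≤ d2 := Real.sqrt_nonneg _
  have hs2 : (d1+d2)^2 ≤ (2*a)^2 := by
    apply pow_le_pow_left₀ (by linarith) h
  have hk : 2*(d1*d2) ≤ 4*a^2 - 2*(X^2+Y^2+c^2) := by nlinarith [hs2, hd1, hd2]
  have hkn : 0 ≤ 2*(d1*d2) := by positivity
  have key : (2*(d1*d2))^2 ≤ (4*a^2 - 2*(X^2+Y^2+c^2))^2 := by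
    apply pow_le_pow_left₀ hkn hk
  have prod : (d1*d2)^2 = (X^2+Y^2+c^2)^2 - 4*c^2*X^2 := by
    rw [mul_pow, hd1, hd2]; ring
  nlinarith [key, prod]

lemma myle_sqrt (w y : ℝ) : w ≤ Real.sqrt (w^2 + y^2) :=
  calc w ≤ |w| := le_abs_self w
    _ = Real.sqrt (w^2) := (Real.sqrt_sq_eq_abs w).symm
    _ ≤ Real.sqrt (w^2+y^2) := Real.sqrt_le_sqrt (by nlinarith [sq_nonneg y])


set_option maxHeartbeats 1000000 in
theorem stmt7 (b c : ℝ) (hb : 0 ≤ b) (hc : 0 ≤ c) :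
    (0 < b ∨ 0 < c →
      numRange !![(c : ℂ), 2 * b; 0, -c] =
        { z : ℂ | ‖z + c‖ + ‖z - c‖ ≤ 2 * Real.sqrt (b ^ 2 + c ^ 2) }) ∧
    (b = 0 → c = 0 → numRange !![(c : ℂ), 2 * b; 0, -c] = {0}) := by
  constructor
  · intro hbc
    have hbc2 : 0 < b^2 + c^2 := by
      rcases hbc with h|h
      · nlinarith [sq_nonneg c]
      · nlinarith [sq_nonneg b]
    have ha : 0 < Real.sqrt (b^2+c^2) := Real.sqrt_pos.2 hbc2
    have ha2 : (Real.sqrt (b^2+c^2))^2 = b^2+c^2 := Real.sq_sqrt hbc2.le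
    obtain ⟨a, hadef⟩ : ∃ a : ℝ, a = Real.sqrt (b^2+c^2) := ⟨_, rfl⟩
    rw [← hadef] at ha ha2
    ext z
    simp only [Set.mem_setOf_eq, mymem_iff, myabs_add, myabs_sub, ← hadef]
    constructor
    · rintro ⟨p,q,r,t,h1,h2,h3⟩
      have hsum : (p^2+q^2-r^2-t^2)^2 + 4*(p*r+q*t)^2 + 4*(p*t-q*r)^2 ≤ 1 := by
        have hid : (p^2+q^2-r^2-t^2)^2 + 4*(p*r+q*t)^2 + 4*(p*t-q*r)^2
            = (p^2+q^2+r^2+t^2)^2 := by ring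
        rw [hid, h1]; norm_num
      exact myfwd b c a z.re z.im _ _ _ hb hc ha ha2 hsum h2 h3
    · intro hz
      have hdisk := mydisk a c z.re z.im hz
      have hab2 : a^2 - c^2 = b^2 := by rw [ha2]; ring
      rw [hab2] at hdisk
      rcases eq_or_lt_of_le hb with hb0 | hbpos
      · -- b = 0, hence c > 0
        have hc0 : 0 < c := by
          rcases hbc with h|h
          · exact absurd h (by rw [← hb0]; exact lt_irrefl 0)
          · exact h
        have hac : a = c := by
          have h' : a^2 = c^2 := by rw [ha2, ← hb0]; ring
          calc a = Real.sqrt (a^2) := (Real.sqrt_sq ha.le).symm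
            _ = Real.sqrt (c^2) := by rw [h']
            _ = c := Real.sqrt_sq hc
        rw [← hb0, hac] at hdisk
        have hY2 : z.im^2 ≤ 0 := by nlinarith [hdisk, mul_pos hc0 hc0]
        have hY0 : z.im = 0 :=
          pow_eq_zero_iff two_ne_zero |>.mp (le_antisymm hY2 (sq_nonneg _))
        have l1 := myle_sqrt (z.re + c) z.im
        have l2 := myle_sqrt (z.re - c) z.im
        have l3 := myle_sqrt (-(z.re + c)) z.im
        have l4 := myle_sqrt (-(z.re - c)) z.im
        rw [show (-(z.re+c))^2 = (z.re+c)^2 by ring] at l3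
        rw [show (-(z.re-c))^2 = (z.re-c)^2 by ring] at l4
        rw [hac] at hz
        have hXle : z.re ≤ c := by linarith
        have hXge : -c ≤ z.re := by linarith
        have hple : 0 ≤ (1+z.re/c)/2 := by
          have : (-1:ℝ) ≤ z.re/c := by rw [le_div_iff₀ hc0]; linarith
          linarith
        have hqle : 0 ≤ (1-z.re/c)/2 := by
          have : z.re/c ≤ 1 := by rw [div_le_one hc0]; linarith
          linarith
        refine ⟨Real.sqrt ((1+z.re/c)/2), 0, Real.sqrt ((1-z.re/c)/2), 0, ?_, ?_, ?_⟩
        · rw [Real.sq_sqrt hple, Real.sq_sqrt hqle]; ring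
        · rw [Real.sq_sqrt hple, Real.sq_sqrt hqle, ← hb0]
          field_simp
          ring
        · rw [← hb0, hY0]; ring
      · -- b > 0
        have hane : a ≠ 0 := ne_of_gt ha
        have hbne : b ≠ 0 := ne_of_gt hbpos
        have hlam0 : 0 ≤ 1 - z.im^2/b^2 - z.re^2/a^2 := by
          have h' : z.im^2/b^2 + z.re^2/a^2 ≤ 1 := by
            rw [div_add_div _ _ (by positivity) (by positivity), div_le_one (by positivity)]
            nlinarith [hdisk]
          linarith
        obtain ⟨lam, hlamdef⟩ : ∃ l : ℝ, l = Real.sqrt (1 - z.im^2/b^2 - z.re^2/a^2) := ⟨_, rfl⟩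
        have hlam2 : lam^2 = 1 - z.im^2/b^2 - z.re^2/a^2 := by rw [hlamdef]; exact Real.sq_sqrt hlam0
        obtain ⟨s, hsdef⟩ : ∃ s : ℝ, s = c*z.re/a^2 - b*lam/a := ⟨_, rfl⟩
        obtain ⟨t, htdef⟩ : ∃ t : ℝ, t = b*z.re/a^2 + c*lam/a := ⟨_, rfl⟩
        have hst : c*s + b*t = z.re := by
          have h' : c*s + b*t = (b^2+c^2)*(z.re/a^2) := by rw [hsdef, htdef]; ring
          rw [h', ← ha2]
          field_simp
        have hs2t2 : s^2 + t^2 = 1 - z.im^2/b^2 := by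
          have h' : s^2 + t^2 = (b^2+c^2)*(z.re^2/a^4) + (b^2+c^2)*(lam^2/a^2) := by
            rw [hsdef, htdef]; ring
          rw [h', ← ha2, hlam2]
          field_simp
          ring
        have himb : 0 ≤ z.im^2/b^2 := by positivity
        have hs1 : s^2 ≤ 1 := by nlinarith [sq_nonneg t]
        have key : t^2 + z.im^2/b^2 = 1 - s^2 := by linarith
        by_cases hs : s = -1
        · have h0 : t^2 + z.im^2/b^2 = 0 := by rw [key, hs]; ring
          have ht2 : t^2 = 0 := by linarith [sq_nonneg t, himb]
          have ht0 : t = 0 := pow_eq_zero_iff two_ne_zero |>.mp ht2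
          have hY0 : z.im = 0 := by
            have h2' : z.im^2/b^2 = 0 := by linarith [sq_nonneg t]
            field_simp at h2'
            simpa using h2'
          have hXc : z.re = -c := by rw [← hst, hs, ht0]; ring
          refine ⟨0, 0, 1, 0, by norm_num, ?_, ?_⟩
          · rw [hXc]; ring
          · rw [hY0]; ring
        · have hsgt : -1 < s := lt_of_le_of_ne (by nlinarith) (Ne.symm hs)
          have h1s : (1:ℝ) + s ≠ 0 := by intro h; apply hs; linarith
          have hp : 0 < (1+s)/2 := by linarith
          obtain ⟨sp, hspdef⟩ : ∃ v : ℝ, v = Real.sqrt ((1+s)/2) := ⟨_, rfl⟩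
          have hsp2 : sp^2 = (1+s)/2 := by rw [hspdef]; exact Real.sq_sqrt hp.le
          have hsppos : 0 < sp := by rw [hspdef]; exact Real.sqrt_pos.2 hp
          have hspne : sp ≠ 0 := ne_of_gt hsppos
          refine ⟨sp, 0, t/(2*sp), z.im/(2*b*sp), ?_, ?_, ?_⟩
          · have g1 : sp^2 + 0^2 + (t/(2*sp))^2 + (z.im/(2*b*sp))^2
                = sp^2 + (t^2 + z.im^2/b^2)/(4*sp^2) := by
              field_simp
              ring
            rw [g1, key, hsp2]
            field_simp
            ring
          · have g2a : sp^2 + 0^2 - (t/(2*sp))^2 - (z.im/(2*b*sp))^2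
                = sp^2 - (t^2 + z.im^2/b^2)/(4*sp^2) := by
              field_simp
              ring
            have g2b : sp*(t/(2*sp)) + 0*(z.im/(2*b*sp)) = t/2 := by
              field_simp
              ring
            have g2c : (1+s)/2 - (1-s^2)/(4*((1+s)/2)) = s := by
              field_simp
              ring
            rw [g2a, key, hsp2, g2b, g2c, ← hst]
            ring
          · have g3 : sp*(z.im/(2*b*sp)) - 0*(t/(2*sp)) = z.im/(2*b) := by
              field_simp
              ring
            rw [g3]
            field_simp
  · intro hb0 hc0
    subst hb0; subst hc0
    ext z
    simp only [Set.mem_singleton_iff, mymem_iff]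
    constructor
    · rintro ⟨p,q,r,t,h1,h2,h3⟩
      have : z.re = 0 := by rw [h2]; norm_num
      have h4 : z.im = 0 := by rw [h3]; norm_num
      exact Complex.ext this h4
    · rintro rfl
      exact ⟨1,0,0,0, by norm_num, by norm_num, by norm_num⟩
end

section
/- For every 2×2 complex matrix A with eigenvalues λ₁ and λ₂ (counted with multiplicity), s⁺(A)² − s⁻(A)² = |λ₁ − λ₂|²/4; that is, the focal semi-distance of the elliptical disk W(A) equals half the distance between the eigenvalues. -/
open Matrix Polynomial

/-- s⁻(A) = (1/2)·√( tr(B*B) − |tr(B²)| ) for B = A − (tr A / 2)·I. -/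
noncomputable def sMinus (A : Matrix (Fin 2) (Fin 2) ℂ) : ℝ :=
  let B := A - (Matrix.trace A / 2) • (1 : Matrix (Fin 2) (Fin 2) ℂ)
  (1 / 2) * Real.sqrt ((Matrix.trace (Bᴴ * B)).re - ‖Matrix.trace (B ^ 2)‖)

lemma key_ineq (x y z : ℂ) :
    ‖2*x^2 + 2*(y*z)‖ ≤ Complex.normSq x + Complex.normSq y + Complex.normSq z + Complex.normSq x := by
  have h1 := norm_add_le (2*x^2) (2*(y*z))
  have h2 : ‖2*x^2‖ = 2 * ‖x‖ ^ 2 := by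
    simp [norm_mul, norm_pow]
  have h3 : ‖2*(y*z)‖ = 2 * (‖y‖ * ‖z‖) := by
    simp [norm_mul]
  have hx := Complex.sq_norm x
  have hy := Complex.sq_norm y
  have hz := Complex.sq_norm z
  nlinarith [sq_nonneg (‖y‖ - ‖z‖), norm_nonneg x]

theorem stmt11 (A : Matrix (Fin 2) (Fin 2) ℂ) (lam1 lam2 : ℂ)
    (heig : A.charpoly = (X - C lam1) * (X - C lam2)) :
    sPlus A ^ 2 - sMinus A ^ 2 = ‖lam1 - lam2‖ ^ 2 / 4 := by
  have ht := Matrix.trace_eq_neg_charpoly_coeff A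
  have hd := Matrix.det_eq_sign_charpoly_coeff A
  rw [heig] at ht hd
  have h : (X - C lam1) * (X - C lam2) = X^2 - C (lam1+lam2) * X + C (lam1*lam2) := by
    rw [C_add, C_mul]; ring
  rw [h] at ht hd
  simp [coeff_X, Matrix.trace_fin_two, Matrix.det_fin_two] at ht hd
  set B := A - (Matrix.trace A / 2) • (1 : Matrix (Fin 2) (Fin 2) ℂ) with hB
  have hB11 : B 1 1 = - B 0 0 := by
    simp [hB, Matrix.trace_fin_two, Matrix.one_apply]; ring
  have hs : (Matrix.trace (Bᴴ * B)).re =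
      Complex.normSq (B 0 0) + Complex.normSq (B 0 1) + Complex.normSq (B 1 0) + Complex.normSq (B 1 1) := by
    simp [Matrix.trace_fin_two, Matrix.mul_apply, Fin.sum_univ_two, Matrix.conjTranspose_apply,
      Complex.normSq_apply, Complex.mul_re, Complex.conj_re, Complex.conj_im]
    ring
  have htr2 : Matrix.trace (B ^ 2) = 2 * (B 0 0)^2 + 2 * (B 0 1 * B 1 0) := by
    rw [sq]
    simp [Matrix.trace_fin_two, Matrix.mul_apply, Fin.sum_univ_two, hB11]
    ring
  have hval : Matrix.trace (B ^ 2) = (lam1 - lam2)^2 / 2 := by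
    rw [htr2]
    have e0 : B 0 0 = A 0 0 - (A 0 0 + A 1 1)/2 := by
      simp [hB, Matrix.trace_fin_two, Matrix.one_apply]
    have e1 : B 0 1 = A 0 1 := by simp [hB, Matrix.one_apply]
    have e2 : B 1 0 = A 1 0 := by simp [hB, Matrix.one_apply]
    rw [e0, e1, e2]
    linear_combination (lam1 + lam2 + A 0 0 + A 1 1) / 2 * ht - 2 * hd
  -- abbreviations
  set s := (Matrix.trace (Bᴴ * B)).re with hsdef
  set m := ‖Matrix.trace (B ^ 2)‖ with hmdef
  have hm : m = ‖lam1 - lam2‖ ^ 2 / 2 := by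
    rw [hmdef, hval]
    rw [norm_div, norm_pow]; norm_num
  have hmnn : 0 ≤ m := norm_nonneg _
  have hineq : m ≤ s := by
    rw [hmdef, htr2, hs, hB11]
    simpa using key_ineq (B 0 0) (B 0 1) (B 1 0)
  have hsp : sPlus A = (1/2) * Real.sqrt (s + m) := rfl
  have hsm : sMinus A = (1/2) * Real.sqrt (s - m) := rfl
  rw [hsp, hsm, mul_pow, mul_pow, Real.sq_sqrt (by linarith), Real.sq_sqrt (by linarith), hm]
  ring
end

section
/- For every 2×2 complex matrix A, the numerical range W(A) is a convex subset of ℂ. -/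
open Matrix

private lemma dot_self_eq (x : Fin 2 → ℂ) :
    star x ⬝ᵥ x = ((∑ i, ‖x i‖ ^ 2 : ℝ) : ℂ) := by
  simp [dotProduct, Complex.star_def, Complex.conj_mul', Complex.sq_norm]
  norm_cast
  simp [Complex.sq_norm]

private lemma expandB (B : Matrix (Fin 2) (Fin 2) ℂ) (x y : Fin 2 → ℂ) (s₁ s₂ : ℂ) :
    star (s₁ • x + s₂ • y) ⬝ᵥ B.mulVec (s₁ • x + s₂ • y)
    = (starRingEnd ℂ s₁) * s₁ * (star x ⬝ᵥ B.mulVec x)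
      + (starRingEnd ℂ s₁) * s₂ * (star x ⬝ᵥ B.mulVec y)
      + (starRingEnd ℂ s₂) * s₁ * (star y ⬝ᵥ B.mulVec x)
      + (starRingEnd ℂ s₂) * s₂ * (star y ⬝ᵥ B.mulVec y) := by
  simp [Matrix.mulVec_add, Matrix.mulVec_smul, dotProduct_add, add_dotProduct,
    smul_dotProduct, dotProduct_smul, star_add, star_smul, smul_eq_mul, Complex.star_def]
  ring

private lemma expand0 (x y : Fin 2 → ℂ) (s₁ s₂ : ℂ) :
    star (s₁ • x + s₂ • y) ⬝ᵥ (s₁ • x + s₂ • y)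
    = (starRingEnd ℂ s₁) * s₁ * (star x ⬝ᵥ x)
      + (starRingEnd ℂ s₁) * s₂ * (star x ⬝ᵥ y)
      + (starRingEnd ℂ s₂) * s₁ * (star y ⬝ᵥ x)
      + (starRingEnd ℂ s₂) * s₂ * (star y ⬝ᵥ y) := by
  simp [dotProduct_add, add_dotProduct, smul_dotProduct, dotProduct_smul, star_add,
    star_smul, smul_eq_mul, Complex.star_def]
  ring

private lemma smul_q (B : Matrix (Fin 2) (Fin 2) ℂ) (x : Fin 2 → ℂ) (μ : ℂ) :
    star (μ • x) ⬝ᵥ B.mulVec (μ • x)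
    = (starRingEnd ℂ μ) * μ * (star x ⬝ᵥ B.mulVec x) := by
  simp [Matrix.mulVec_smul, dotProduct_smul, smul_dotProduct, star_smul, smul_eq_mul,
    Complex.star_def]
  ring

private lemma dot_conj (x y : Fin 2 → ℂ) :
    star y ⬝ᵥ x = starRingEnd ℂ (star x ⬝ᵥ y) := by
  simp [dotProduct, map_sum, Complex.star_def, mul_comm]

private lemma phase (u w : ℂ) :
    ∃ c : ℂ, ‖c‖ = 1 ∧ (c * u + (starRingEnd ℂ c) * w).im = 0 := by
  set d : ℂ := u - starRingEnd ℂ w with hd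
  have key : ∀ c : ℂ, c * u + (starRingEnd ℂ c) * w
      = c * d + ((starRingEnd ℂ c * w) + starRingEnd ℂ (starRingEnd ℂ c * w)) := by
    intro c
    simp only [hd, _root_.map_mul, Complex.conj_conj]
    ring
  have him : ∀ c : ℂ, (c * d).im = 0 → (c * u + (starRingEnd ℂ c) * w).im = 0 := by
    intro c h
    rw [key c, Complex.add_im, h, Complex.add_conj, zero_add, Complex.ofReal_im]
  by_cases hd0 : d = 0
  · exact ⟨1, by simp, him 1 (by simp [hd0])⟩
  · refine ⟨starRingEnd ℂ d / (‖d‖ : ℂ), ?_, him _ ?_⟩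
    · simp only [norm_div, Complex.norm_conj, Complex.norm_real, norm_norm]
      exact div_self (norm_ne_zero_iff.mpr hd0)
    · rw [div_mul_eq_mul_div, ← Complex.normSq_eq_conj_mul_self]
      rw [show ((Complex.normSq d : ℂ) / (‖d‖ : ℂ))
          = ((Complex.normSq d / ‖d‖ : ℝ) : ℂ) by push_cast; ring]
      exact Complex.ofReal_im _

private lemma key_lemma (B : Matrix (Fin 2) (Fin 2) ℂ) (x y : Fin 2 → ℂ)
    (hx : (∑ i, ‖x i‖ ^ 2) = 1) (hy : (∑ i, ‖y i‖ ^ 2) = 1)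
    (hqx : star x ⬝ᵥ B.mulVec x = 0) (hqy : star y ⬝ᵥ B.mulVec y = 1)
    {b : ℝ} (hb : b ∈ Set.Icc (0 : ℝ) 1) :
    ∃ v : Fin 2 → ℂ, (∑ i, ‖v i‖ ^ 2) = 1 ∧
      star v ⬝ᵥ B.mulVec v = (b : ℂ) := by
  obtain ⟨c, hc1, hcim⟩ := phase (star x ⬝ᵥ B.mulVec y) (star y ⬝ᵥ B.mulVec x)
  have hc : starRingEnd ℂ c * c = 1 := by
    rw [← Complex.normSq_eq_conj_mul_self, Complex.normSq_eq_norm_sq, hc1]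
    norm_num
  set u : ℂ := star x ⬝ᵥ B.mulVec y with hu
  set w : ℂ := star y ⬝ᵥ B.mulVec x with hw
  set m : ℝ := (c * u + starRingEnd ℂ c * w).re with hm0
  have hm : c * u + starRingEnd ℂ c * w = (m : ℂ) := by
    rw [hm0]
    conv_lhs => rw [← Complex.re_add_im (c * u + starRingEnd ℂ c * w)]
    rw [hcim]
    simp
  set p : ℂ := star x ⬝ᵥ y with hp
  set r : ℝ := 2 * (c * p).re with hr
  have h2 : c * p + starRingEnd ℂ c * starRingEnd ℂ p = (r : ℂ) := by
    rw [show starRingEnd ℂ c * starRingEnd ℂ p = starRingEnd ℂ (c * p) by rw [_root_.map_mul],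
      Complex.add_conj, hr]
  set v : ℝ → (Fin 2 → ℂ) := fun t => ((1 - t : ℝ) : ℂ) • x + (((t : ℝ) : ℂ) * c) • y with hv
  set N : ℝ → ℝ := fun t => (1 - t) ^ 2 + t ^ 2 + t * (1 - t) * r with hNdef
  have hxx : star x ⬝ᵥ x = 1 := by rw [dot_self_eq, hx]; norm_num
  have hyy : star y ⬝ᵥ y = 1 := by rw [dot_self_eq, hy]; norm_num
  have hyx : star y ⬝ᵥ x = starRingEnd ℂ p := by rw [hp, dot_conj]
  have hconj : ∀ t : ℝ, starRingEnd ℂ ((1 - t : ℝ) : ℂ) = ((1 - t : ℝ) : ℂ) := by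
    intro t; exact Complex.conj_ofReal _
  have hN : ∀ t : ℝ, star (v t) ⬝ᵥ (v t) = ((N t : ℝ) : ℂ) := by
    intro t
    rw [hv, expand0, hxx, hyy, hyx, hconj, _root_.map_mul, Complex.conj_ofReal]
    push_cast [hNdef]
    linear_combination ((t : ℂ) * (1 - t)) * h2 + ((t : ℂ) ^ 2) * hc
  have hq : ∀ t : ℝ, star (v t) ⬝ᵥ B.mulVec (v t) = ((t * (1 - t) * m + t ^ 2 : ℝ) : ℂ) := by
    intro t
    rw [hv, expandB, hqx, hqy, ← hu, ← hw, hconj, _root_.map_mul, Complex.conj_ofReal]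
    push_cast
    linear_combination ((t : ℂ) * (1 - t)) * hm + ((t : ℂ) ^ 2) * hc
  have hsum : ∀ t : ℝ, (∑ i, ‖v t i‖ ^ 2) = N t := by
    intro t
    have := (dot_self_eq (v t)).symm.trans (hN t)
    exact_mod_cast this
  have hNpos : ∀ t ∈ Set.Icc (0 : ℝ) 1, 0 < N t := by
    intro t ht
    rcases lt_or_eq_of_le (Finset.sum_nonneg fun i _ => sq_nonneg (‖v t i‖))
      with h | h
    · rw [← hsum t]; exact h
    · exfalso
      have hv0 : ∀ i, v t i = 0 := by
        intro i
        have hz := (Finset.sum_eq_zero_iff_of_nonneg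
          (fun i _ => sq_nonneg (‖v t i‖))).mp h.symm i (Finset.mem_univ i)
        have := pow_eq_zero_iff (n := 2) (by norm_num) |>.mp hz
        exact norm_eq_zero.mp this
      by_cases ht0 : t = 0
      · have hx0 : x = 0 := by
          funext i
          have := hv0 i
          simp [hv, ht0] at this
          exact this
        rw [hx0] at hx
        simp at hx
      · have hc0 : c ≠ 0 := by
          intro h0; rw [h0] at hc1; simp at hc1
        have hyμ : y = (-(((1 - t : ℝ) : ℂ)) / (((t : ℝ) : ℂ) * c)) • x := by
          funext i
          have h3 := hv0 i
          simp only [hv, Pi.add_apply, Pi.smul_apply, smul_eq_mul] at h3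
          have htne : ((t : ℝ) : ℂ) ≠ 0 := by exact_mod_cast ht0
          rw [Pi.smul_apply, smul_eq_mul, div_mul_eq_mul_div,
            eq_div_iff (mul_ne_zero htne hc0)]
          linear_combination h3
        have : (1 : ℂ) = 0 := by
          rw [← hqy, hyμ, smul_q, hqx, mul_zero]
        simp at this
  set f : ℝ → ℝ := fun t => (t * (1 - t) * m + t ^ 2) / N t with hf
  have hfc : ContinuousOn f (Set.Icc (0 : ℝ) 1) := by
    apply ContinuousOn.div
    · fun_prop
    · fun_prop
    · intro t ht; exact (hNpos t ht).ne'
  have hf0 : f 0 = 0 := by simp [hf, hNdef]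
  have hf1 : f 1 = 1 := by simp [hf, hNdef]
  have hbmem : b ∈ Set.Icc (f 0) (f 1) := by rw [hf0, hf1]; exact hb
  obtain ⟨t, ht, hft⟩ := intermediate_value_Icc (by norm_num : (0 : ℝ) ≤ 1) hfc hbmem
  set s : ℝ := Real.sqrt (N t) with hs
  have hspos : 0 < s := Real.sqrt_pos.mpr (hNpos t ht)
  have hs2 : s ^ 2 = N t := Real.sq_sqrt (hNpos t ht).le
  refine ⟨((s⁻¹ : ℝ) : ℂ) • v t, ?_, ?_⟩
  · have : ∀ i, ‖(((s⁻¹ : ℝ) : ℂ) • v t) i‖ ^ 2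
        = s⁻¹ ^ 2 * ‖v t i‖ ^ 2 := by
      intro i
      simp [Pi.smul_apply, smul_eq_mul, norm_mul, Complex.norm_real,
        abs_of_nonneg (inv_nonneg.mpr hspos.le), mul_pow]
    rw [Finset.sum_congr rfl fun i _ => this i, ← Finset.mul_sum, hsum t, ← hs2]
    field_simp
  · rw [smul_q, Complex.conj_ofReal, hq t]
    have hNne : N t ≠ 0 := (hNpos t ht).ne'
    have : t * (1 - t) * m + t ^ 2 = b * N t := by
      have hft' : (t * (1 - t) * m + t ^ 2) / N t = b := hft
      rw [div_eq_iff hNne] at hft'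
      linarith [hft']
    rw [this]
    norm_cast
    rw [← hs2, sq]
    field_simp

theorem stmt12 (A : Matrix (Fin 2) (Fin 2) ℂ) : Convex ℝ (numRange A) := by
  intro z1 hz1 z2 hz2 a b ha hb hab
  obtain ⟨x, hx, hqx⟩ := hz1
  obtain ⟨y, hy, hqy⟩ := hz2
  by_cases hz : z1 = z2
  · refine ⟨x, hx, ?_⟩
    rw [hqx, hz, ← add_smul, hab, one_smul]
  · have hsub : z2 - z1 ≠ 0 := sub_ne_zero.mpr (Ne.symm hz)
    set α : ℂ := (z2 - z1)⁻¹ with hα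
    have hαne : α ≠ 0 := inv_ne_zero hsub
    set B : Matrix (Fin 2) (Fin 2) ℂ := α • A + (-(z1 * α)) • (1 : Matrix (Fin 2) (Fin 2) ℂ)
      with hB
    have hqB : ∀ u : Fin 2 → ℂ, star u ⬝ᵥ B.mulVec u
        = α * (star u ⬝ᵥ A.mulVec u) + (-(z1 * α)) * (star u ⬝ᵥ u) := by
      intro u
      have hmv : B.mulVec u = α • A.mulVec u + (-(z1 * α)) • u := by
        rw [hB, Matrix.add_mulVec, Matrix.smul_mulVec, Matrix.smul_mulVec,
          Matrix.one_mulVec]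
      rw [hmv, dotProduct_add, dotProduct_smul, dotProduct_smul, smul_eq_mul, smul_eq_mul]
    have hxx : star x ⬝ᵥ x = 1 := by rw [dot_self_eq, hx]; norm_num
    have hyy : star y ⬝ᵥ y = 1 := by rw [dot_self_eq, hy]; norm_num
    have hBx : star x ⬝ᵥ B.mulVec x = 0 := by
      rw [hqB, hqx, hxx]; ring
    have hBy : star y ⬝ᵥ B.mulVec y = 1 := by
      rw [hqB, hqy, hyy, hα]
      field_simp
      ring
    obtain ⟨v, hv1, hv2⟩ := key_lemma B x y hx hy hBx hBy
      (b := b) ⟨hb, by linarith⟩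
    refine ⟨v, hv1, ?_⟩
    rw [hqB, dot_self_eq, hv1] at hv2
    push_cast at hv2
    have ha' : (a : ℂ) = 1 - (b : ℂ) := by
      have : a = 1 - b := by linarith
      exact_mod_cast this
    have h1 : (z2 - z1) * (α * (star v ⬝ᵥ A.mulVec v) + (-(z1 * α)) * 1)
        = (z2 - z1) * (b : ℂ) := by rw [hv2]
    have h2 : (z2 - z1) * α = 1 := by rw [hα]; exact mul_inv_cancel₀ hsub
    have hval : star v ⬝ᵥ A.mulVec v = (b : ℂ) * (z2 - z1) + z1 := by
      linear_combination h1 + (z1 - (star v ⬝ᵥ A.mulVec v)) * h2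
    rw [hval]
    simp only [Complex.real_smul]
    linear_combination (-z1) * ha'
end

section
/- A 2×2 complex matrix A is normal (A·A* = A*·A) if and only if s⁻(A) = 0, i.e. if and only if tr(B*B) = |tr(B²)| where B = A − (tr A / 2)·I; equivalently, the elliptical disk W(A) degenerates (minor semi-axis zero) exactly when A is normal. -/
open Matrix


lemma myid (u b c : ℂ) :
    (2 * Complex.normSq u + Complex.normSq b + Complex.normSq c)^2 =
      Complex.normSq (2*(u^2 + b*c)) + (Complex.normSq b - Complex.normSq c)^2
        + 4 * Complex.normSq (u * (starRingEnd ℂ) c - (starRingEnd ℂ) u * b) := by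
  simp only [pow_two, Complex.normSq_apply, Complex.mul_re, Complex.mul_im,
    Complex.add_re, Complex.add_im, Complex.sub_re, Complex.sub_im,
    Complex.conj_re, Complex.conj_im, Complex.re_ofNat, Complex.im_ofNat]
  ring

lemma myge (u b c : ℂ) :
    ‖2*(u^2 + b*c)‖ ≤ 2 * Complex.normSq u + Complex.normSq b + Complex.normSq c := by
  have hid := myid u b c
  have h1 : ‖2*(u^2+b*c)‖ ^ 2 = Complex.normSq (2*(u^2+b*c)) := Complex.sq_norm _
  have h2 : (0:ℝ) ≤ ‖2*(u^2+b*c)‖ := norm_nonneg _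
  have h3 : (0:ℝ) ≤ 2 * Complex.normSq u + Complex.normSq b + Complex.normSq c := by
    have := Complex.normSq_nonneg u
    have := Complex.normSq_nonneg b
    have := Complex.normSq_nonneg c
    linarith
  nlinarith [Complex.normSq_nonneg (u * (starRingEnd ℂ) c - (starRingEnd ℂ) u * b),
    sq_nonneg (Complex.normSq b - Complex.normSq c)]

lemma mycore (u b c : ℂ) :
    (b * (starRingEnd ℂ) b = c * (starRingEnd ℂ) c ∧
      u * (starRingEnd ℂ) c = (starRingEnd ℂ) u * b) ↔
    2 * Complex.normSq u + Complex.normSq b + Complex.normSq c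
      = ‖2*(u^2 + b*c)‖ := by
  have hid := myid u b c
  have h1 : ‖2*(u^2+b*c)‖ ^ 2 = Complex.normSq (2*(u^2+b*c)) := Complex.sq_norm _
  constructor
  · rintro ⟨hb, hq⟩
    have hbc : Complex.normSq b = Complex.normSq c := by
      have : ((Complex.normSq b : ℂ)) = (Complex.normSq c : ℂ) := by
        rw [Complex.mul_conj] at hb
        rw [Complex.mul_conj] at hb
        exact hb
      exact_mod_cast this
    have hq0 : Complex.normSq (u * (starRingEnd ℂ) c - (starRingEnd ℂ) u * b) = 0 := by
      rw [sub_eq_zero.mpr hq, Complex.normSq_zero]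
    have hsq : (2 * Complex.normSq u + Complex.normSq b + Complex.normSq c)^2
        = ‖2*(u^2+b*c)‖ ^ 2 := by
      rw [h1, hid, hbc, hq0]; ring
    have h3 : (0:ℝ) ≤ 2 * Complex.normSq u + Complex.normSq b + Complex.normSq c := by
      have := Complex.normSq_nonneg u
      have := Complex.normSq_nonneg b
      have := Complex.normSq_nonneg c
      linarith
    have h2 : (0:ℝ) ≤ ‖2*(u^2+b*c)‖ := norm_nonneg _
    nlinarith
  · intro h
    have hsq : (2 * Complex.normSq u + Complex.normSq b + Complex.normSq c)^2
        = Complex.normSq (2*(u^2+b*c)) := by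
      rw [h, h1]
    have hz : (Complex.normSq b - Complex.normSq c)^2
        + 4 * Complex.normSq (u * (starRingEnd ℂ) c - (starRingEnd ℂ) u * b) = 0 := by
      linarith [hid, hsq]
    have hp : Complex.normSq b - Complex.normSq c = 0 := by
      nlinarith [Complex.normSq_nonneg (u * (starRingEnd ℂ) c - (starRingEnd ℂ) u * b),
        sq_nonneg (Complex.normSq b - Complex.normSq c)]
    have hq : u * (starRingEnd ℂ) c - (starRingEnd ℂ) u * b = 0 := by
      have : Complex.normSq (u * (starRingEnd ℂ) c - (starRingEnd ℂ) u * b) = 0 := by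
        nlinarith [sq_nonneg (Complex.normSq b - Complex.normSq c)]
      exact Complex.normSq_eq_zero.mp this
    refine ⟨?_, sub_eq_zero.mp hq⟩
    rw [Complex.mul_conj, Complex.mul_conj]
    exact_mod_cast (by linarith : Complex.normSq b = Complex.normSq c)

theorem stmt14 (A : Matrix (Fin 2) (Fin 2) ℂ) :
    (A * Aᴴ = Aᴴ * A ↔ sMinus A = 0) ∧
    (A * Aᴴ = Aᴴ * A ↔
      (Matrix.trace ((A - (Matrix.trace A / 2) • (1 : Matrix (Fin 2) (Fin 2) ℂ))ᴴ *
          (A - (Matrix.trace A / 2) • (1 : Matrix (Fin 2) (Fin 2) ℂ)))).re =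
        ‖Matrix.trace
          ((A - (Matrix.trace A / 2) • (1 : Matrix (Fin 2) (Fin 2) ℂ)) ^ 2)‖) := by
  set t : ℂ := Matrix.trace A / 2 with ht
  set B : Matrix (Fin 2) (Fin 2) ℂ := A - t • (1 : Matrix (Fin 2) (Fin 2) ℂ) with hB
  have hB00 : B 0 0 = A 0 0 - t := by simp [hB, Matrix.one_apply]
  have hB01 : B 0 1 = A 0 1 := by simp [hB, Matrix.one_apply]
  have hB10 : B 1 0 = A 1 0 := by simp [hB, Matrix.one_apply]
  have hB11 : B 1 1 = A 1 1 - t := by simp [hB, Matrix.one_apply]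
  have htr : t = (A 0 0 + A 1 1) / 2 := by rw [ht, Matrix.trace_fin_two]
  have hd : B 1 1 = -(B 0 0) := by rw [hB00, hB11, htr]; ring
  have hXc : Matrix.trace (Bᴴ * B) =
      (starRingEnd ℂ) (B 0 0) * B 0 0 + (starRingEnd ℂ) (B 1 0) * B 1 0
      + ((starRingEnd ℂ) (B 0 1) * B 0 1 + (starRingEnd ℂ) (B 1 1) * B 1 1) := by
    rw [Matrix.trace_fin_two]
    simp [Matrix.mul_apply, Fin.sum_univ_two, Matrix.conjTranspose_apply]
  have hX : (Matrix.trace (Bᴴ * B)).re =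
      2 * Complex.normSq (B 0 0) + Complex.normSq (B 0 1) + Complex.normSq (B 1 0) := by
    rw [hXc, hd]
    simp only [Complex.add_re, Complex.neg_re, Complex.mul_re, Complex.mul_im,
      Complex.conj_re, Complex.conj_im, Complex.neg_im, Complex.normSq_apply]
    ring
  have hy : Matrix.trace (B ^ 2) = 2 * ((B 0 0)^2 + B 0 1 * B 1 0) := by
    rw [pow_two, Matrix.trace_fin_two]
    simp only [Matrix.mul_apply, Fin.sum_univ_two]
    rw [hd]; ring
  have hnorm : A * Aᴴ = Aᴴ * A ↔
      (B 0 1 * (starRingEnd ℂ) (B 0 1) = B 1 0 * (starRingEnd ℂ) (B 1 0) ∧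
       B 0 0 * (starRingEnd ℂ) (B 1 0) = (starRingEnd ℂ) (B 0 0) * B 0 1) := by
    rw [hB00, hB01, hB10, htr]
    rw [← Matrix.ext_iff]
    simp only [Fin.forall_fin_two, Matrix.mul_apply, Fin.sum_univ_two,
      Matrix.conjTranspose_apply, Complex.star_def, map_sub, map_add, map_div₀, map_ofNat]
    constructor
    · rintro ⟨⟨h00, h01⟩, h10, h11⟩
      constructor
      · linear_combination h00
      · linear_combination h01 / 2
    · rintro ⟨h1, h2⟩
      have h2' := congrArg (starRingEnd ℂ) h2
      simp only [_root_.map_mul, map_sub, map_add, map_div₀, map_ofNat,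
        Complex.conj_conj] at h2'
      refine ⟨⟨?_, ?_⟩, ?_, ?_⟩
      · linear_combination h1
      · linear_combination 2 * h2
      · linear_combination 2 * h2'
      · linear_combination -h1
  have hmain : A * Aᴴ = Aᴴ * A ↔
      (Matrix.trace (Bᴴ * B)).re = ‖Matrix.trace (B ^ 2)‖ := by
    rw [hnorm, hX, hy]
    exact mycore (B 0 0) (B 0 1) (B 1 0)
  refine ⟨?_, hmain⟩
  rw [hmain]
  have hge : ‖Matrix.trace (B ^ 2)‖ ≤ (Matrix.trace (Bᴴ * B)).re := by
    rw [hX, hy]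
    exact myge (B 0 0) (B 0 1) (B 1 0)
  have hs : sMinus A = (1/2) * Real.sqrt ((Matrix.trace (Bᴴ * B)).re
      - ‖Matrix.trace (B ^ 2)‖) := by
    simp only [sMinus]
    rfl
  rw [hs]
  constructor
  · intro h
    rw [h]
    simp
  · intro h
    have h2 : Real.sqrt ((Matrix.trace (Bᴴ * B)).re - ‖Matrix.trace (B ^ 2)‖) = 0 := by
      have := mul_eq_zero.mp h
      rcases this with h' | h'
      · norm_num at h'
      · exact h'
    have h3 : (Matrix.trace (Bᴴ * B)).re - ‖Matrix.trace (B ^ 2)‖ ≤ 0 :=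
      Real.sqrt_eq_zero'.mp h2
    linarith
end

section
/- For every 2×2 complex matrix A, the point tr(A)/2 is the center of the elliptical disk W(A); in particular tr(A)/2 ∈ W(A), and W(A) is symmetric about tr(A)/2 (if z ∈ W(A) then tr(A) − z ∈ W(A)). -/
open Matrix

lemma exists_w (b c m : ℂ) :
    ∃ w : ℂ, (starRingEnd ℂ) w * w = 1 ∧
      ((b * w + c * (starRingEnd ℂ) w) * (starRingEnd ℂ) m).im = 0 := by
  set α : ℝ := ((b + c) * (starRingEnd ℂ) m).im with hα
  set β : ℝ := ((b - c) * (starRingEnd ℂ) m).re with hβ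
  set u : ℂ := ⟨β, -α⟩ with hu
  by_cases h0 : u = 0
  · refine ⟨1, by simp, ?_⟩
    have hα0 : α = 0 := by
      have := congrArg Complex.im h0; simpa [hu] using this
    simp only [_root_.map_one, mul_one]
    rw [hα] at hα0
    simpa [add_mul] using hα0
  · refine ⟨u / (‖u‖ : ℂ), ?_, ?_⟩
    · rw [map_div₀, Complex.conj_ofReal]
      rw [div_mul_div_comm]
      rw [Complex.conj_mul']
      norm_cast
      rw [sq]
      exact div_self (by simpa using h0 :
        ‖u‖ * ‖u‖ ≠ 0)
    · simp only [map_div₀, Complex.conj_ofReal]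
      rw [show b * (u / (‖u‖ : ℂ)) + c * ((starRingEnd ℂ) u / (‖u‖ : ℂ))
            = (b * u + c * (starRingEnd ℂ) u) / (‖u‖ : ℂ) by ring]
      rw [div_mul_eq_mul_div, Complex.div_ofReal_im]
      suffices h : ((b * u + c * (starRingEnd ℂ) u) * (starRingEnd ℂ) m).im = 0 by
        rw [h]; simp
      simp only [hu, hα, hβ, Complex.mul_im, Complex.mul_re, Complex.add_im, Complex.add_re,
        Complex.sub_re, Complex.sub_im, Complex.conj_re, Complex.conj_im, neg_neg]
      ring

theorem stmt16 (A : Matrix (Fin 2) (Fin 2) ℂ) :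
    Matrix.trace A / 2 ∈ numRange A ∧
    ∀ z ∈ numRange A, Matrix.trace A - z ∈ numRange A := by
  constructor
  · show Matrix.trace A / 2 ∈ numRange A
    set a := A 0 0 with ha
    set b := A 0 1 with hb
    set c := A 1 0 with hc
    set d := A 1 1 with hd
    by_cases hm : a - d = 0
    · refine ⟨![1, 0], by simp [Fin.sum_univ_two], ?_⟩
      have had : a = d := by linear_combination hm
      simp only [Matrix.mulVec, dotProduct, Fin.sum_univ_two, Pi.star_apply,
        Matrix.trace, Matrix.diag, Matrix.cons_val_zero, Matrix.cons_val_one,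
        Matrix.head_cons, RCLike.star_def]
      rw [← ha, ← hb, ← hc, ← hd, ← had]
      simp
    · obtain ⟨w, hww, him⟩ := exists_w b c (a - d)
      -- abs w = 1
      have hw1 : ‖w‖ = 1 := by
        have h2 : Complex.normSq w = 1 := by
          have := congrArg Complex.re hww
          simpa [Complex.normSq_apply, Complex.mul_re, Complex.conj_re, Complex.conj_im] using this
        rw [← Complex.sq_norm] at h2
        nlinarith [norm_nonneg w]
      set ζ : ℂ := b * w + c * (starRingEnd ℂ) w with hζ
      have hns : Complex.normSq (a - d) ≠ 0 := by
        simpa [Complex.normSq_eq_zero] using hm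
      set s : ℝ := (ζ * (starRingEnd ℂ) (a - d)).re / Complex.normSq (a - d) with hs
      have hbw : ζ = (s : ℂ) * (a - d) := by
        have hreal : ζ * (starRingEnd ℂ) (a - d)
            = ((ζ * (starRingEnd ℂ) (a - d)).re : ℂ) := by
          apply Complex.ext
          · simp
          · rw [Complex.ofReal_im]; exact him
        have hmm : (a - d) * (starRingEnd ℂ) (a - d) = (Complex.normSq (a - d) : ℂ) :=
          Complex.mul_conj _
        have hnsC : (Complex.normSq (a - d) : ℂ) ≠ 0 := by exact_mod_cast hns
        rw [hs]
        push_cast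
        rw [div_mul_eq_mul_div, eq_div_iff hnsC, ← hmm]
        linear_combination (a - d) * hreal
      set r : ℝ := Real.sqrt (1 + s ^ 2) with hr
      have hr2 : r ^ 2 = 1 + s ^ 2 := Real.sq_sqrt (by positivity)
      have hrpos : 0 < r := Real.sqrt_pos.mpr (by positivity)
      have hsr : |s| ≤ r := by
        rw [hr, ← Real.sqrt_sq_eq_abs]
        exact Real.sqrt_le_sqrt (by nlinarith)
      have hσ1 : s / r ≤ 1 := by
        rw [div_le_one hrpos]; exact le_trans (le_abs_self s) hsr
      have hσ2 : -1 ≤ s / r := by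
        rw [le_div_iff₀ hrpos, neg_one_mul, neg_le]; exact le_trans (neg_le_abs s) hsr
      set c1 : ℝ := Real.sqrt ((1 - s / r) / 2) with hc1d
      set s1 : ℝ := Real.sqrt ((1 + s / r) / 2) with hs1d
      have hc1 : c1 ^ 2 = (1 - s / r) / 2 := Real.sq_sqrt (by linarith)
      have hs1 : s1 ^ 2 = (1 + s / r) / 2 := Real.sq_sqrt (by linarith)
      have hcs : c1 * s1 = 1 / (2 * r) := by
        rw [hc1d, hs1d, ← Real.sqrt_mul (by linarith)]
        rw [show (1 - s / r) / 2 * ((1 + s / r) / 2) = (1 / (2 * r)) ^ 2 by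
          field_simp
          nlinarith]
        exact Real.sqrt_sq (by positivity)
      refine ⟨![(c1 : ℂ), w * (s1 : ℂ)], ?_, ?_⟩
      · rw [Fin.sum_univ_two]
        simp only [Matrix.cons_val_zero, Matrix.cons_val_one, Matrix.head_cons,
          norm_mul, Complex.norm_real, Real.norm_eq_abs, hw1, one_mul]
        rw [_root_.abs_of_nonneg (Real.sqrt_nonneg _), _root_.abs_of_nonneg (Real.sqrt_nonneg _)]
        rw [← hc1d, ← hs1d]
        linarith [hc1, hs1]
      · have hC : ((c1 : ℂ)) ^ 2 = (1 - (s : ℂ) / (r : ℂ)) / 2 := by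
          exact_mod_cast congrArg (Complex.ofReal) hc1
        have hS : ((s1 : ℂ)) ^ 2 = (1 + (s : ℂ) / (r : ℂ)) / 2 := by
          exact_mod_cast congrArg (Complex.ofReal) hs1
        have hCS : ((c1 : ℂ)) * ((s1 : ℂ)) = 1 / (2 * (r : ℂ)) := by
          exact_mod_cast congrArg (Complex.ofReal) hcs
        simp only [Matrix.mulVec, dotProduct, Fin.sum_univ_two, Pi.star_apply,
          Matrix.trace, Matrix.diag, Matrix.cons_val_zero, Matrix.cons_val_one,
          Matrix.head_cons, RCLike.star_def, _root_.map_mul, Complex.conj_ofReal]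
        rw [← ha, ← hb, ← hc, ← hd]
        rw [hζ] at hbw
        linear_combination (a : ℂ) * hC + d * hS + d * ((s1 : ℂ)) ^ 2 * hww
          + ((c1 : ℂ) * (s1 : ℂ)) * hbw + (s : ℂ) * (a - d) * hCS
  · rintro z ⟨x, hx, hz⟩
    refine ⟨![-(starRingEnd ℂ) (x 1), (starRingEnd ℂ) (x 0)], ?_, ?_⟩
    · rw [Fin.sum_univ_two] at hx ⊢
      simpa [add_comm] using hx
    · have h1 : (starRingEnd ℂ) (x 0) * x 0 + (starRingEnd ℂ) (x 1) * x 1 = 1 := by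
        rw [Fin.sum_univ_two] at hx
        rw [Complex.sq_norm, Complex.sq_norm] at hx
        rw [mul_comm, Complex.mul_conj, mul_comm, Complex.mul_conj]
        norm_cast
      simp only [Matrix.mulVec, dotProduct, Fin.sum_univ_two, Pi.star_apply,
        Matrix.trace, Matrix.diag, Fin.sum_univ_two] at hz ⊢
      simp only [Matrix.cons_val_zero, Matrix.cons_val_one, Matrix.head_cons, RCLike.star_def,
        map_neg, Complex.conj_conj] at hz ⊢
      linear_combination (A 0 0 + A 1 1) * h1 - hz
end

section
/- For every 2×2 complex matrix A, the numerical range W(A) is a compact subset of ℂ contained in the closed disk of radius s⁺(A) centered at tr(A)/2: for all z ∈ W(A), |z − tr(A)/2| ≤ s⁺(A). -/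
open Matrix

lemma numRange_isCompact (A : Matrix (Fin 2) (Fin 2) ℂ) : IsCompact (numRange A) := by
  have hS : IsCompact {x : Fin 2 → ℂ | (∑ i, ‖x i‖ ^ 2) = 1} := by
    apply Metric.isCompact_of_isClosed_isBounded
    · have hc : Continuous fun x : Fin 2 → ℂ => ∑ i, ‖x i‖ ^ 2 :=
        continuous_finset_sum _ fun i _ =>
          (continuous_norm.comp (continuous_apply i)).pow 2
      exact isClosed_eq hc continuous_const
    · rw [Metric.isBounded_iff_subset_closedBall 0]
      refine ⟨1, fun x hx => ?_⟩
      simp only [Metric.mem_closedBall, dist_zero_right]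
      rw [pi_norm_le_iff_of_nonneg zero_le_one]
      intro i
      have hx' : (∑ j, ‖x j‖ ^ 2) = 1 := hx
      have h1 : ‖x i‖ ^ 2 ≤ 1 := by
        have := Finset.single_le_sum (f := fun j => ‖x j‖ ^ 2)
          (fun j _ => by positivity) (Finset.mem_univ i)
        rw [hx'] at this; exact this
      have h2 : (0:ℝ) ≤ ‖x i‖ := norm_nonneg _
      nlinarith
  have hf : Continuous fun x : Fin 2 → ℂ => star x ⬝ᵥ A.mulVec x := by
    simp only [dotProduct, mulVec, Pi.star_apply]
    exact continuous_finset_sum _ fun i _ =>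
      ((continuous_star.comp (continuous_apply i)).mul
        (continuous_finset_sum _ fun j _ => continuous_const.mul (continuous_apply j)))
  have himg : numRange A = (fun x : Fin 2 → ℂ => star x ⬝ᵥ A.mulVec x) ''
      {x : Fin 2 → ℂ | (∑ i, ‖x i‖ ^ 2) = 1} := by
    ext z
    constructor
    · rintro ⟨x, h1, h2⟩; exact ⟨x, h1, h2⟩
    · rintro ⟨x, h1, h2⟩; exact ⟨x, h1, h2⟩
  rw [himg]
  exact hS.image hf

lemma numRange_bound (A : Matrix (Fin 2) (Fin 2) ℂ) (x : Fin 2 → ℂ)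
    (hx : (∑ i, ‖x i‖ ^ 2) = 1) :
    ‖star x ⬝ᵥ A.mulVec x - Matrix.trace A / 2‖ ≤ sPlus A := by
  set c : ℂ := Matrix.trace A / 2 with hc
  set B : Matrix (Fin 2) (Fin 2) ℂ := A - c • (1 : Matrix (Fin 2) (Fin 2) ℂ) with hB
  have hsPlus : sPlus A
      = (1 / 2) * Real.sqrt ((Matrix.trace (Bᴴ * B)).re + ‖Matrix.trace (B ^ 2)‖) :=
    rfl
  -- star x ⬝ᵥ x = 1
  have hx1 : star x ⬝ᵥ x = 1 := by
    have h1 : star x ⬝ᵥ x = ((∑ i, ‖x i‖ ^ 2 : ℝ) : ℂ) := by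
      simp only [dotProduct, Pi.star_apply, RCLike.star_def, Complex.conj_mul']
      push_cast
      rfl
    rw [h1, hx]; norm_num
  have hzB : star x ⬝ᵥ B.mulVec x = star x ⬝ᵥ A.mulVec x - c := by
    rw [hB, sub_mulVec, smul_mulVec, one_mulVec, dotProduct_sub, dotProduct_smul, hx1]
    simp [smul_eq_mul]
  have htrB : Matrix.trace B = 0 := by
    rw [hB, trace_sub, trace_smul, Matrix.trace_one]
    simp [hc]
  have hab : (starRingEnd ℂ) (x 0) * x 0 + (starRingEnd ℂ) (x 1) * x 1 = 1 := by
    have := hx1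
    simpa [dotProduct, Fin.sum_univ_two, RCLike.star_def] using this
  set U : Matrix (Fin 2) (Fin 2) ℂ := !![x 0, -(star (x 1)); x 1, star (x 0)] with hUdef
  have hU : Uᴴ * U = 1 := by
    ext i j
    fin_cases i <;> fin_cases j <;>
      simp [hUdef, mul_apply, Fin.sum_univ_two, conjTranspose_apply]
    all_goals first
      | linear_combination hab
      | linear_combination -hab
      | ring
  have hU' : U * Uᴴ = 1 := mul_eq_one_comm.mp hU
  obtain ⟨C, hCdef⟩ : ∃ C : Matrix (Fin 2) (Fin 2) ℂ, C = Uᴴ * B * U := ⟨_, rfl⟩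
  have hCH : Cᴴ = Uᴴ * Bᴴ * U := by
    simp [hCdef, conjTranspose_mul, Matrix.mul_assoc]
  have hCC : Cᴴ * C = Uᴴ * (Bᴴ * B) * U := by
    rw [hCH, hCdef]
    calc Uᴴ * Bᴴ * U * (Uᴴ * B * U) = Uᴴ * Bᴴ * (U * Uᴴ) * (B * U) := by
          simp only [Matrix.mul_assoc]
      _ = Uᴴ * (Bᴴ * B) * U := by
          rw [hU']
          simp only [Matrix.mul_assoc, Matrix.mul_one, Matrix.one_mul]
  have hC2 : C * C = Uᴴ * (B * B) * U := by
    rw [hCdef]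
    calc Uᴴ * B * U * (Uᴴ * B * U) = Uᴴ * B * (U * Uᴴ) * (B * U) := by
          simp only [Matrix.mul_assoc]
      _ = Uᴴ * (B * B) * U := by
          rw [hU']
          simp only [Matrix.mul_assoc, Matrix.mul_one, Matrix.one_mul]
  have htr1 : Matrix.trace (Cᴴ * C) = Matrix.trace (Bᴴ * B) := by
    rw [hCC, Matrix.trace_mul_cycle, ← Matrix.mul_assoc, hU', Matrix.one_mul]
  have htr2 : Matrix.trace (C * C) = Matrix.trace (B * B) := by
    rw [hC2, Matrix.trace_mul_cycle, ← Matrix.mul_assoc, hU', Matrix.one_mul]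
  have htrC : Matrix.trace C = 0 := by
    rw [hCdef, Matrix.trace_mul_cycle, hU', Matrix.one_mul, htrB]
  have hC00 : C 0 0 = star x ⬝ᵥ B.mulVec x := by
    rw [hCdef]
    simp [hUdef, mul_apply, mulVec, dotProduct, Fin.sum_univ_two, conjTranspose_apply]
    ring
  have hC11 : C 1 1 = -(C 0 0) := by
    have h := htrC
    rw [trace_fin_two] at h
    linear_combination h
  have hT1 : (Matrix.trace (Bᴴ * B)).re
      = ‖C 0 0‖ ^ 2 + ‖C 0 1‖ ^ 2 + ‖C 1 0‖ ^ 2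
        + ‖C 0 0‖ ^ 2 := by
    have hsq : ∀ u : ℂ, ‖u‖ ^ 2 = u.re ^ 2 + u.im ^ 2 := by
      intro u
      rw [Complex.sq_norm, Complex.normSq_apply]; ring
    rw [← htr1]
    have habs11 : ‖C 1 1‖ = ‖C 0 0‖ := by
      rw [hC11]; exact norm_neg _
    rw [show ‖C 0 0‖ ^ 2 + ‖C 0 1‖ ^ 2 + ‖C 1 0‖ ^ 2
        + ‖C 0 0‖ ^ 2
        = ‖C 0 0‖ ^ 2 + ‖C 0 1‖ ^ 2 + ‖C 1 0‖ ^ 2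
          + ‖C 1 1‖ ^ 2 by rw [habs11]]
    simp only [trace_fin_two, mul_apply, Fin.sum_univ_two, conjTranspose_apply,
      Complex.star_def, Complex.add_re, Complex.mul_re, Complex.conj_re, Complex.conj_im,
      hsq]
    ring
  have hT2 : Matrix.trace (B ^ 2) = 2 * (C 0 0 ^ 2 + C 0 1 * C 1 0) := by
    rw [pow_two, ← htr2]
    simp only [trace_fin_two, mul_apply, Fin.sum_univ_two, hC11]
    ring
  have htri : ‖C 0 0‖ ^ 2 - ‖C 0 1‖ * ‖C 1 0‖
      ≤ ‖C 0 0 ^ 2 + C 0 1 * C 1 0‖ := by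
    have h := norm_sub_norm_le (C 0 0 ^ 2) (-(C 0 1 * C 1 0))
    rw [sub_neg_eq_add, norm_neg] at h
    have h2 : ‖C 0 1 * C 1 0‖ = ‖C 0 1‖ * ‖C 1 0‖ :=
      norm_mul _ _
    have h3 : ‖C 0 0 ^ 2‖ = ‖C 0 0‖ ^ 2 :=
      norm_pow _ _
    linarith
  have key : 4 * ‖C 0 0‖ ^ 2
      ≤ (Matrix.trace (Bᴴ * B)).re + ‖Matrix.trace (B ^ 2)‖ := by
    rw [hT1, hT2, norm_mul]
    have h2 : ‖(2 : ℂ)‖ = 2 := by simp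
    rw [h2]
    nlinarith [htri, sq_nonneg (‖C 0 1‖ - ‖C 1 0‖),
      norm_nonneg (C 0 1), norm_nonneg (C 1 0)]
  have hzw : star x ⬝ᵥ A.mulVec x - c = C 0 0 := by rw [hC00, hzB]
  rw [show star x ⬝ᵥ A.mulVec x - c = C 0 0 from hzw, hsPlus]
  set T : ℝ := (Matrix.trace (Bᴴ * B)).re + ‖Matrix.trace (B ^ 2)‖ with hT
  have hTnn : 0 ≤ T := le_trans (by positivity) key
  have hw2 : ‖C 0 0‖ ^ 2 ≤ T / 4 := by linarith
  have h1 : ‖C 0 0‖ ≤ Real.sqrt (T / 4) := by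
    rw [← Real.sqrt_sq (norm_nonneg (C 0 0))]
    exact Real.sqrt_le_sqrt hw2
  have h2 : Real.sqrt (T / 4) = (1 / 2) * Real.sqrt T := by
    rw [Real.sqrt_div hTnn]
    rw [show (4:ℝ) = 2 ^ 2 by norm_num, Real.sqrt_sq (by norm_num : (0:ℝ) ≤ 2)]
    ring
  rw [← h2]; exact h1

theorem stmt17 (A : Matrix (Fin 2) (Fin 2) ℂ) :
    IsCompact (numRange A) ∧
    ∀ z ∈ numRange A, ‖z - Matrix.trace A / 2‖ ≤ sPlus A := by
  refine ⟨numRange_isCompact A, ?_⟩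
  rintro z ⟨x, h1, rfl⟩
  exact numRange_bound A x h1
end
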